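/- arXiv:2305.01324 — 10 statements merged into one kernel-verified Lean document; each statement's English description precedes it below -/
import Mathlib

section
/- Consider a packing integer linear program given by a matrix A ∈ ℝ_{≥0}^{m×n}, a vector b ∈ ℝ_{≥0}^{m}, and weights w ∈ ℤ_{≥0}^{n}. Let S ⊆ {1,…,n}, let x* ∈ {0,1}^n be a feasible vector maximizing the weight w·x over all feasible vectors, and let y ∈ {0,1}^n be a feasible vector with y_i = 0 for all i ∉ S that maximizes w·y among all feasible vectors supported on S. Then Σ_{i∈S} w_i x*_i ≤ Σ_{i∈S} w_i y_i ≤ Σ_{i∈N¹(S)} w_i x*_i. -/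
open Finset
open scoped Classical

/-- For a packing ILP with nonnegative data, any global optimum `xstar`
and any optimum `y` of the local instance restricted to a subset `S` of the variables
satisfy `W(xstar, S) ≤ W(y, S) ≤ W(xstar, N¹(S))`, where
`N¹(S) = S ∪ ⋃ {e_j : e_j ∩ S ≠ ∅}` and `e_j = {i : A j i ≠ 0}`.
Solutions `x ∈ {0,1}ⁿ` are represented by the finite set of indices assigned `1`. -/
theorem stmt_0 {m n : ℕ} (A : Matrix (Fin m) (Fin n) ℝ) (b : Fin m → ℝ)
    (w : Fin n → ℕ)
    (hA : ∀ j i, 0 ≤ A j i) (hb : ∀ j, 0 ≤ b j)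
    (S : Finset (Fin n)) (xstar y : Finset (Fin n))
    (hxfeas : ∀ j, ∑ i ∈ xstar, A j i ≤ b j)
    (hxopt : ∀ x : Finset (Fin n), (∀ j, ∑ i ∈ x, A j i ≤ b j) →
      ∑ i ∈ x, w i ≤ ∑ i ∈ xstar, w i)
    (hyS : y ⊆ S)
    (hyfeas : ∀ j, ∑ i ∈ y, A j i ≤ b j)
    (hyopt : ∀ x : Finset (Fin n), x ⊆ S → (∀ j, ∑ i ∈ x, A j i ≤ b j) →
      ∑ i ∈ x, w i ≤ ∑ i ∈ y, w i) :
    ∑ i ∈ S ∩ xstar, w i ≤ ∑ i ∈ S ∩ y, w i ∧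
    ∑ i ∈ S ∩ y, w i ≤
      ∑ i ∈ (S ∪ Finset.univ.filter fun v : Fin n =>
        ∃ j : Fin m, A j v ≠ 0 ∧ ∃ u ∈ S, A j u ≠ 0) ∩ xstar, w i := by
  have hSy : S ∩ y = y := Finset.inter_eq_right.mpr hyS
  set N := S ∪ Finset.univ.filter fun v : Fin n =>
      ∃ j : Fin m, A j v ≠ 0 ∧ ∃ u ∈ S, A j u ≠ 0 with hN
  constructor
  · -- first inequality
    rw [hSy]
    apply hyopt _ Finset.inter_subset_left
    intro j
    calc ∑ i ∈ S ∩ xstar, A j i ≤ ∑ i ∈ xstar, A j i := by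
          apply Finset.sum_le_sum_of_subset_of_nonneg Finset.inter_subset_right
          intro i _ _; exact hA j i
      _ ≤ b j := hxfeas j
  · rw [hSy]
    have hSN : S ⊆ N := Finset.subset_union_left
    have hdisj : Disjoint y (xstar \ N) :=
      (Finset.sdiff_disjoint.mono_right (hyS.trans hSN)).symm
    set z := y ∪ (xstar \ N) with hz
    have hzfeas : ∀ j, ∑ i ∈ z, A j i ≤ b j := by
      intro j
      rw [hz, Finset.sum_union hdisj]
      by_cases hcase : ∃ u ∈ S, A j u ≠ 0
      · have h0 : ∑ i ∈ xstar \ N, A j i = 0 := by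
          apply Finset.sum_eq_zero
          intro v hv
          by_contra hne
          have : v ∈ N := by
            rw [hN]
            exact Finset.mem_union_right _ (Finset.mem_filter.mpr ⟨Finset.mem_univ _, j, hne, hcase⟩)
          exact (Finset.mem_sdiff.mp hv).2 this
        rw [h0, add_zero]; exact hyfeas j
      · push_neg at hcase
        have h0 : ∑ i ∈ y, A j i = 0 :=
          Finset.sum_eq_zero fun i hi => hcase i (hyS hi)
        rw [h0, zero_add]
        calc ∑ i ∈ xstar \ N, A j i ≤ ∑ i ∈ xstar, A j i := by
              apply Finset.sum_le_sum_of_subset_of_nonneg Finset.sdiff_subset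
              intro i _ _; exact hA j i
          _ ≤ b j := hxfeas j
    have hzle := hxopt z hzfeas
    rw [hz, Finset.sum_union hdisj] at hzle
    have hsplit : ∑ i ∈ xstar ∩ N, w i + ∑ i ∈ xstar \ N, w i = ∑ i ∈ xstar, w i :=
      Finset.sum_inter_add_sum_sdiff xstar N w
    rw [Finset.inter_comm N xstar]
    omega
end

section
/- Let 0 < p ≤ 1, let n ≥ 1, and let X_1, …, X_n be independent geometric random variables with parameter p. Set X = Σ_{i=1}^n X_i and μ = n/p. Then for every real δ > 1/p − 1, P[X > μ + δn] ≤ exp(−p²δn/6). -/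
/-!
Chernoff: `P[X ≥ a] ≤ e^{-ta} M(t)^n`, where `M(t) = p e^t / (1 - q e^t)`, `q = 1 - p`, is the
moment generating function of a geometric variable. For `p < 1` put `x = pδ > q` and choose
`e^t = (q + x) / (q (1 + x))`, i.e. `t = -log (1 - v)` with `v = px / (q + x)`. Then
`M(t) = e^t (1 + x)`, and `-log (1 - v) ≥ v + v²/2` together with `log (1 + x) ≤ x` bound the
exponent per variable by `-px² / (2 (q + x)) ≤ -px/6`, as `q < x`. For `p = 1`, `M(t) = e^t` and
`t = 1` suffices.
-/

open MeasureTheory ProbabilityTheory Real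

/-- `E[exp (t Y)]` for `Y` geometric with parameter `p`; junk unless `(1 - p) * exp t < 1`. -/
noncomputable def geometricMGF (p t : ℝ) : ℝ := p * exp t / (1 - (1 - p) * exp t)

lemma geometricMGF_zero {p : ℝ} (hp0 : 0 < p) : geometricMGF p 0 = 1 := by
  simp [geometricMGF, hp0.ne']

lemma geometricMGF_pos {p t : ℝ} (hp0 : 0 < p) (ht : (1 - p) * exp t < 1) :
    0 < geometricMGF p t :=
  div_pos (by positivity) (by linarith)

lemma hasSum_exp_mul_geometric {p t : ℝ} (hp1 : p ≤ 1) (ht : (1 - p) * exp t < 1) :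
    HasSum (fun j : ℕ => exp (t * (j + 1 : ℕ)) * ((1 - p) ^ j * p)) (geometricMGF p t) := by
  have hr0 : 0 ≤ (1 - p) * exp t := mul_nonneg (by linarith) (exp_pos t).le
  have hterm (j : ℕ) :
      exp (t * (j + 1 : ℕ)) * ((1 - p) ^ j * p) = p * exp t * ((1 - p) * exp t) ^ j := by
    rw [Nat.cast_succ, mul_add_one, exp_add, mul_comm t, exp_nat_mul, mul_pow]
    ring
  simpa only [hterm, geometricMGF, div_eq_mul_inv] using
    (hasSum_geometric_of_lt_one hr0 ht).mul_left (p * exp t)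

lemma lintegral_comp_eq_tsum {Ω α : Type*} [MeasurableSpace Ω] [MeasurableSpace α]
    [MeasurableSingletonClass α] [Countable α] {μ : Measure Ω} {Y : Ω → α} (hY : Measurable Y)
    (f : α → ENNReal) :
    ∫⁻ ω, f (Y ω) ∂μ = ∑' k, f k * μ {ω | Y ω = k} := by
  rw [← lintegral_map (measurable_of_countable f) hY, lintegral_countable']
  refine tsum_congr fun k => ?_
  rw [Measure.map_apply hY (measurableSet_singleton k)]
  rfl

def HasGeometricLaw {Ω : Type*} [MeasurableSpace Ω] (μ : Measure Ω) (Y : Ω → ℕ) (p : ℝ) : Prop :=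
  ∀ k : ℕ, 1 ≤ k → μ {ω | Y ω = k} = ENNReal.ofReal ((1 - p) ^ (k - 1) * p)

section Geometric

variable {Ω : Type*} [MeasurableSpace Ω] {μ : Measure Ω} {Y : Ω → ℕ} {p t : ℝ}

lemma lintegral_exp_mul_eq_measure_zero_add (hY : Measurable Y) (hlaw : HasGeometricLaw μ Y p)
    (hp0 : 0 < p) (hp1 : p ≤ 1) (ht : (1 - p) * exp t < 1) :
    ∫⁻ ω, ENNReal.ofReal (exp (t * Y ω)) ∂μ =
      μ {ω | Y ω = 0} + ENNReal.ofReal (geometricMGF p t) := by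
  have hterm (j : ℕ) : ENNReal.ofReal (exp (t * (j + 1 : ℕ))) * μ {ω | Y ω = j + 1} =
      ENNReal.ofReal (exp (t * (j + 1 : ℕ)) * ((1 - p) ^ j * p)) := by
    rw [hlaw (j + 1) (Nat.le_add_left 1 j), ENNReal.ofReal_mul (exp_pos _).le,
      Nat.add_sub_cancel]
  have hsum := hasSum_exp_mul_geometric hp1 ht
  rw [lintegral_comp_eq_tsum hY (fun k => ENNReal.ofReal (exp (t * k))),
    tsum_eq_zero_add' ENNReal.summable, tsum_congr hterm,
    ← ENNReal.ofReal_tsum_of_nonneg (fun j => by positivity) hsum.summable, hsum.tsum_eq]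
  simp

variable [IsProbabilityMeasure μ]

lemma measure_eq_zero_of_hasGeometricLaw (hY : Measurable Y) (hlaw : HasGeometricLaw μ Y p)
    (hp0 : 0 < p) (hp1 : p ≤ 1) : μ {ω | Y ω = 0} = 0 := by
  have h := lintegral_exp_mul_eq_measure_zero_add hY hlaw hp0 hp1 (t := 0) (by simpa using hp0)
  simp only [zero_mul, exp_zero, ENNReal.ofReal_one, lintegral_const, measure_univ, mul_one,
    geometricMGF_zero hp0] at h
  exact (ENNReal.add_left_inj ENNReal.one_ne_top).1 (h.symm.trans (zero_add 1).symm)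

lemma lintegral_exp_mul_of_hasGeometricLaw (hY : Measurable Y) (hlaw : HasGeometricLaw μ Y p)
    (hp0 : 0 < p) (hp1 : p ≤ 1) (ht : (1 - p) * exp t < 1) :
    ∫⁻ ω, ENNReal.ofReal (exp (t * Y ω)) ∂μ = ENNReal.ofReal (geometricMGF p t) := by
  rw [lintegral_exp_mul_eq_measure_zero_add hY hlaw hp0 hp1 ht,
    measure_eq_zero_of_hasGeometricLaw hY hlaw hp0 hp1, zero_add]

lemma integrable_exp_mul_of_hasGeometricLaw (hY : Measurable Y) (hlaw : HasGeometricLaw μ Y p)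
    (hp0 : 0 < p) (hp1 : p ≤ 1) (ht : (1 - p) * exp t < 1) :
    Integrable (fun ω => exp (t * Y ω)) μ := by
  refine ⟨by fun_prop, ?_⟩
  rw [hasFiniteIntegral_iff_ofReal (ae_of_all _ fun ω => (exp_pos _).le),
    lintegral_exp_mul_of_hasGeometricLaw hY hlaw hp0 hp1 ht]
  exact ENNReal.ofReal_lt_top

lemma mgf_of_hasGeometricLaw (hY : Measurable Y) (hlaw : HasGeometricLaw μ Y p)
    (hp0 : 0 < p) (hp1 : p ≤ 1) (ht : (1 - p) * exp t < 1) :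
    mgf (fun ω => (Y ω : ℝ)) μ t = geometricMGF p t := by
  rw [mgf,
    integral_eq_lintegral_of_nonneg_ae (ae_of_all _ fun ω => (exp_pos _).le) (by fun_prop),
    lintegral_exp_mul_of_hasGeometricLaw hY hlaw hp0 hp1 ht,
    ENNReal.toReal_ofReal (geometricMGF_pos hp0 ht).le]

end Geometric

lemma measure_sum_ge_le_of_hasGeometricLaw {Ω ι : Type*} [MeasurableSpace Ω] {μ : Measure Ω}
    [IsProbabilityMeasure μ] [Fintype ι] {X : ι → Ω → ℕ} {p t : ℝ} (hX : ∀ i, Measurable (X i))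
    (hindep : iIndepFun X μ) (hlaw : ∀ i, HasGeometricLaw μ (X i) p) (hp0 : 0 < p) (hp1 : p ≤ 1)
    (ht0 : 0 ≤ t) (ht : (1 - p) * exp t < 1) (ε : ℝ) :
    μ {ω | ε ≤ ∑ i, (X i ω : ℝ)} ≤
      ENNReal.ofReal (exp (-t * ε) * geometricMGF p t ^ Fintype.card ι) := by
  have hYindep : iIndepFun (fun i ω => (X i ω : ℝ)) μ :=
    hindep.comp (fun _ => (Nat.cast : ℕ → ℝ)) (fun _ => measurable_from_top)
  have hYm (i : ι) : Measurable (fun ω => (X i ω : ℝ)) := measurable_from_top.comp (hX i)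
  have hint := hYindep.integrable_exp_mul_sum hYm (s := Finset.univ)
    (fun i _ => integrable_exp_mul_of_hasGeometricLaw (hX i) (hlaw i) hp0 hp1 ht)
  have hchernoff := measure_ge_le_exp_mul_mgf ε ht0 hint
  rw [hYindep.mgf_sum hYm, Finset.prod_congr rfl
    (fun i _ => mgf_of_hasGeometricLaw (hX i) (hlaw i) hp0 hp1 ht), Finset.prod_const,
    Finset.card_univ] at hchernoff
  rw [← ofReal_measureReal]
  convert ENNReal.ofReal_le_ofReal hchernoff using 4
  simp

lemma le_neg_log_one_sub {v : ℝ} (h0 : 0 ≤ v) (h1 : v < 1) : v + v ^ 2 / 2 ≤ -log (1 - v) := by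
  have hsum := hasSum_pow_div_log_of_abs_lt_one (abs_lt.2 ⟨by linarith, h1⟩)
  have := sum_le_hasSum (Finset.range 2) (fun n _ => by positivity) hsum
  norm_num [Finset.sum_range_succ] at this
  linarith

lemma log_one_add_sub_mul_le {p q x t : ℝ} (hp0 : 0 < p) (hq0 : 0 ≤ q) (hxq : q < x)
    (ht : p * x / (q + x) + (p * x / (q + x)) ^ 2 / 2 ≤ t) :
    log (1 + x) - t * ((q + x) / p) ≤ -(p * x / 6) := by
  have hx0 : 0 < x := hq0.trans_lt hxq
  have hlog : log (1 + x) ≤ x := by linarith [log_le_sub_one_of_pos (by linarith : 0 < 1 + x)]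
  have hvt : x + p * x ^ 2 / (2 * (q + x)) ≤ t * ((q + x) / p) := by
    calc x + p * x ^ 2 / (2 * (q + x))
        = (p * x / (q + x) + (p * x / (q + x)) ^ 2 / 2) * ((q + x) / p) := by
          field_simp
      _ ≤ t * ((q + x) / p) := by gcongr
  have hgap : p * x / 6 ≤ p * x ^ 2 / (2 * (q + x)) := by
    rw [div_le_div_iff₀ (by norm_num) (by positivity)]
    nlinarith [mul_lt_mul_of_pos_left hxq (mul_pos hp0 hx0)]
  linarith

lemma exists_exp_mul_geometricMGF_le_of_lt_one {p δ : ℝ} (hp0 : 0 < p) (hp1 : p < 1)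
    (hδ : 1 / p - 1 < δ) :
    ∃ t, 0 ≤ t ∧ (1 - p) * exp t < 1 ∧
      exp (-t * (1 / p + δ)) * geometricMGF p t ≤ exp (-(p ^ 2 * δ) / 6) := by
  set q := 1 - p with hq
  set x := p * δ with hx
  have hq0 : 0 < q := by linarith
  have hxq : q < x := by
    have h := mul_lt_mul_of_pos_left hδ hp0
    rwa [mul_sub, mul_one_div_cancel hp0.ne', mul_one] at h
  have hx0 : 0 < x := hq0.trans hxq
  set v := p * x / (q + x) with hv
  have hv0 : 0 ≤ v := by positivity
  have hv1 : v < 1 := by rw [hv, div_lt_one (by linarith)]; nlinarith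
  have h1v : 1 - v = q * (1 + x) / (q + x) := by
    rw [hv]; field_simp; rw [hq]; ring
  set t := -log (1 - v)
  have htv : v + v ^ 2 / 2 ≤ t := le_neg_log_one_sub hv0 hv1
  refine ⟨t, by nlinarith, ?_⟩
  have hexp : exp t = (q + x) / (q * (1 + x)) := by
    rw [exp_neg, exp_log (by linarith), h1v, inv_div]
  have hqexp : q * exp t = (q + x) / (1 + x) := by
    rw [hexp]; field_simp
  refine ⟨by rw [hqexp, div_lt_one (by linarith)]; linarith, ?_⟩
  have hcoef : 1 / p + δ - 1 = (q + x) / p := by rw [hq, hx]; field_simp; ring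
  have hden : 1 - q * exp t = p / (1 + x) := by
    rw [hqexp]; field_simp; rw [hq]; ring
  have hM : geometricMGF p t = exp (t + log (1 + x)) := by
    rw [geometricMGF, hden, exp_add, exp_log (by linarith)]
    field_simp
  have hexponent : -t * (1 / p + δ) + (t + log (1 + x)) = log (1 + x) - t * ((q + x) / p) := by
    rw [← hcoef]; ring
  rw [hM, ← exp_add, exp_le_exp, hexponent, show p ^ 2 * δ = p * x by rw [hx]; ring, neg_div]
  exact log_one_add_sub_mul_le hp0 hq0.le hxq htv

lemma exists_exp_mul_geometricMGF_le {p δ : ℝ} (hp0 : 0 < p) (hp1 : p ≤ 1)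
    (hδ : 1 / p - 1 < δ) :
    ∃ t, 0 ≤ t ∧ (1 - p) * exp t < 1 ∧
      exp (-t * (1 / p + δ)) * geometricMGF p t ≤ exp (-(p ^ 2 * δ) / 6) := by
  rcases hp1.lt_or_eq with hp1 | rfl
  · exact exists_exp_mul_geometricMGF_le_of_lt_one hp0 hp1 hδ
  · refine ⟨1, zero_le_one, by simp, ?_⟩
    have hδ0 : 0 < δ := by simpa using hδ
    norm_num [geometricMGF, ← exp_add]
    linarith

theorem stmt_1_general {Ω : Type} [MeasurableSpace Ω] (μ : Measure Ω) [IsProbabilityMeasure μ]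
    (p : ℝ) (hp0 : 0 < p) (hp1 : p ≤ 1) (n : ℕ)
    (X : Fin n → Ω → ℕ) (hmeas : ∀ i, Measurable (X i))
    (hindep : iIndepFun X μ)
    (hgeom : ∀ i, ∀ k : ℕ, 1 ≤ k →
      μ {ω | X i ω = k} = ENNReal.ofReal ((1 - p) ^ (k - 1) * p))
    (δ : ℝ) (hδ : 1 / p - 1 < δ) :
    μ {ω | (n : ℝ) / p + δ * n < ∑ i, (X i ω : ℝ)} ≤
      ENNReal.ofReal (Real.exp (-(p ^ 2 * δ * n) / 6)) := by
  obtain ⟨t, ht0, ht1, hbound⟩ := exists_exp_mul_geometricMGF_le hp0 hp1 hδ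
  calc μ {ω | (n : ℝ) / p + δ * n < ∑ i, (X i ω : ℝ)}
      ≤ μ {ω | (1 / p + δ) * n ≤ ∑ i, (X i ω : ℝ)} := by
        refine measure_mono fun ω hω => ?_
        simp only [Set.mem_ofPred_eq] at hω ⊢
        linarith [show (1 / p + δ) * n = n / p + δ * n by ring]
    _ ≤ ENNReal.ofReal (exp (-t * ((1 / p + δ) * n)) * geometricMGF p t ^ n) := by
        simpa using measure_sum_ge_le_of_hasGeometricLaw hmeas hindep hgeom hp0 hp1 ht0 ht1 _
    _ ≤ ENNReal.ofReal (exp (-(p ^ 2 * δ * n) / 6)) := by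
        gcongr
        calc exp (-t * ((1 / p + δ) * n)) * geometricMGF p t ^ n
            = (exp (-t * (1 / p + δ)) * geometricMGF p t) ^ n := by
              rw [mul_pow, ← exp_nat_mul]; ring_nf
          _ ≤ exp (-(p ^ 2 * δ) / 6) ^ n :=
              pow_le_pow_left₀ (mul_pos (exp_pos _) (geometricMGF_pos hp0 ht1)).le hbound n
          _ = exp (-(p ^ 2 * δ * n) / 6) := by rw [← exp_nat_mul]; ring_nf

/-- For `n ≥ 1` independent geometric random variables with parameter
`0 < p ≤ 1`, with sum `X` and mean `μ = n/p`, for every `δ > 1/p - 1` one has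
`P[X > μ + δn] ≤ exp(-p²δn/6)`. -/
theorem stmt_1 {Ω : Type} [MeasurableSpace Ω] (μ : Measure Ω) [IsProbabilityMeasure μ]
    (p : ℝ) (hp0 : 0 < p) (hp1 : p ≤ 1) (n : ℕ) (hn : 1 ≤ n)
    (X : Fin n → Ω → ℕ) (hmeas : ∀ i, Measurable (X i))
    (hindep : iIndepFun X μ)
    (hgeom : ∀ i, ∀ k : ℕ, 1 ≤ k →
      μ {ω | X i ω = k} = ENNReal.ofReal ((1 - p) ^ (k - 1) * p))
    (δ : ℝ) (hδ : 1 / p - 1 < δ) :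
    μ {ω | (n : ℝ) / p + δ * n < ∑ i, (X i ω : ℝ)} ≤
      ENNReal.ofReal (Real.exp (-(p ^ 2 * δ * n) / 6)) :=
  stmt_1_general μ p hp0 hp1 n X hmeas hindep hgeom δ hδ
end

section
/- There exist universal constants C > 0 and c > 0 such that the following holds. Let X_1, …, X_n be {0,1}-valued random variables on a probability space, let w_1, …, w_n be positive integers, and set X = Σ_{i=1}^n w_i X_i. Let D be a dependency graph for X_1, …, X_n, and suppose the real numbers μ and d ≥ 1 satisfy μ ≥ E[X] and, for every index i, Σ_{j ∈ N_D(i) ∪ {i}} w_j ≤ d, where N_D(i) is the set of neighbors of i in D. Then for every 0 < δ ≤ 1, P[X ≥ (1+δ)μ] ≤ C·d·exp(−c·δ²μ/d). -/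
open MeasureTheory ProbabilityTheory
open scoped Classical ENNReal

private lemma integrable_of_abs_le' {Ω : Type} {mΩ : MeasurableSpace Ω} {μ : Measure Ω}
    [IsProbabilityMeasure μ] {f : Ω → ℝ} (hf : Measurable f) {M : ℝ}
    (h : ∀ ω, |f ω| ≤ M) : Integrable f μ :=
  (integrable_const M).mono' hf.aestronglyMeasurable (ae_of_all _ h)

private lemma mgf_step_bound {Ω : Type} {mΩ : MeasurableSpace Ω} (μ : Measure Ω)
    [IsProbabilityMeasure μ]
    {n : ℕ} (X : Fin n → Ω → ℕ) (w : Fin n → ℕ)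
    (hXm : ∀ i, Measurable (X i)) (hX01 : ∀ i ω, X i ω = 0 ∨ X i ω = 1)
    (D : SimpleGraph (Fin n))
    (hind : ∀ i : Fin n, IndepFun (X i)
        (fun ω (j : {j : Fin n // j ≠ i ∧ ¬D.Adj i j}) => X j.1 ω) μ)
    (d l : ℝ) (hl : 0 ≤ l)
    (hd : ∀ i : Fin n, (w i : ℝ) + ∑ j : Fin n, (if D.Adj i j then (w j : ℝ) else 0) ≤ d)
    (s : Finset (Fin n)) :
    ∫ ω, Real.exp (l * ∑ j ∈ s, (w j : ℝ) * (X j ω : ℝ)) ∂μ ≤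
      Real.exp (∑ j ∈ s, (∫ ω, (X j ω : ℝ) ∂μ) * (Real.exp (l * (w j : ℝ)) - 1) *
        Real.exp (l * d)) := by
  have hXr : ∀ i, Measurable fun ω => (X i ω : ℝ) := fun i => measurable_from_top.comp (hXm i)
  have hXr0 : ∀ i ω, (0:ℝ) ≤ (X i ω : ℝ) := fun i ω => Nat.cast_nonneg _
  have hXr1 : ∀ i ω, (X i ω : ℝ) ≤ 1 := by
    intro i ω; rcases hX01 i ω with h | h <;> simp [h]
  have hw0 : ∀ i, (0:ℝ) ≤ (w i : ℝ) := fun i => Nat.cast_nonneg _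
  have hsumle : ∀ (u : Finset (Fin n)) ω,
      ∑ j ∈ u, (w j : ℝ) * (X j ω : ℝ) ≤ ∑ j ∈ u, (w j : ℝ) :=
    fun u ω => Finset.sum_le_sum fun j _ => mul_le_of_le_one_right (hw0 j) (hXr1 j ω)
  have hsum0 : ∀ (u : Finset (Fin n)) ω, (0:ℝ) ≤ ∑ j ∈ u, (w j : ℝ) * (X j ω : ℝ) :=
    fun u ω => Finset.sum_nonneg fun j _ => mul_nonneg (hw0 j) (hXr0 j ω)
  have hmeas_sum : ∀ u : Finset (Fin n),
      Measurable fun ω => ∑ j ∈ u, (w j : ℝ) * (X j ω : ℝ) :=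
    fun u => Finset.measurable_sum u fun j _ => (hXr j).const_mul _
  have hmeas_exp : ∀ u : Finset (Fin n),
      Measurable fun ω => Real.exp (l * ∑ j ∈ u, (w j : ℝ) * (X j ω : ℝ)) :=
    fun u => Real.measurable_exp.comp (measurable_const.mul (hmeas_sum u))
  have hint_exp : ∀ u : Finset (Fin n),
      Integrable (fun ω => Real.exp (l * ∑ j ∈ u, (w j : ℝ) * (X j ω : ℝ))) μ := by
    intro u
    refine integrable_of_abs_le' (hmeas_exp u) (M := Real.exp (l * ∑ j ∈ u, (w j : ℝ))) ?_
    intro ω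
    rw [abs_of_nonneg (Real.exp_nonneg _)]
    exact Real.exp_le_exp.2 (mul_le_mul_of_nonneg_left (hsumle u ω) hl)
  have hint_mul : ∀ (u : Finset (Fin n)) (i : Fin n),
      Integrable (fun ω => (X i ω : ℝ) * Real.exp (l * ∑ j ∈ u, (w j : ℝ) * (X j ω : ℝ))) μ := by
    intro u i
    refine integrable_of_abs_le' ((hXr i).mul (hmeas_exp u))
      (M := Real.exp (l * ∑ j ∈ u, (w j : ℝ))) ?_
    intro ω
    rw [abs_of_nonneg (mul_nonneg (hXr0 i ω) (Real.exp_nonneg _))]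
    calc (X i ω : ℝ) * Real.exp (l * ∑ j ∈ u, (w j : ℝ) * (X j ω : ℝ))
        ≤ 1 * Real.exp (l * ∑ j ∈ u, (w j : ℝ)) := by
          apply mul_le_mul (hXr1 i ω)
            (Real.exp_le_exp.2 (mul_le_mul_of_nonneg_left (hsumle u ω) hl))
            (Real.exp_nonneg _) one_pos.le
      _ = _ := one_mul _
  induction s using Finset.induction_on with
  | empty => simp
  | @insert i t hi ih =>
    set p : ℝ := ∫ ω, (X i ω : ℝ) ∂μ with hp_def
    set K : ℝ := Real.exp (l * (w i : ℝ)) - 1 with hK_def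
    set Et : ℝ := ∫ ω, Real.exp (l * ∑ j ∈ t, (w j : ℝ) * (X j ω : ℝ)) ∂μ with hEt_def
    -- pointwise expansion
    have hpt : ∀ ω, Real.exp (l * ∑ j ∈ insert i t, (w j : ℝ) * (X j ω : ℝ)) =
        Real.exp (l * ∑ j ∈ t, (w j : ℝ) * (X j ω : ℝ)) +
          K * ((X i ω : ℝ) * Real.exp (l * ∑ j ∈ t, (w j : ℝ) * (X j ω : ℝ))) := by
      intro ω
      rw [Finset.sum_insert hi, mul_add, Real.exp_add, hK_def]
      rcases hX01 i ω with h | h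
      · simp [h]
      · simp only [h, Nat.cast_one, mul_one, one_mul]
        ring
    have hEeq : ∫ ω, Real.exp (l * ∑ j ∈ insert i t, (w j : ℝ) * (X j ω : ℝ)) ∂μ =
        Et + K * ∫ ω, (X i ω : ℝ) * Real.exp (l * ∑ j ∈ t, (w j : ℝ) * (X j ω : ℝ)) ∂μ := by
      simp only [hpt]
      rw [integral_add (hint_exp t) ((hint_mul t i).const_mul K), integral_const_mul]
    -- A/B decomposition
    set tB : Finset (Fin n) := t.filter (fun j => ¬ D.Adj i j) with htB_def
    set tA : Finset (Fin n) := t.filter (fun j => D.Adj i j) with htA_def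
    have hABsum : ∀ ω, ∑ j ∈ t, (w j : ℝ) * (X j ω : ℝ) =
        (∑ j ∈ tA, (w j : ℝ) * (X j ω : ℝ)) + ∑ j ∈ tB, (w j : ℝ) * (X j ω : ℝ) :=
      fun ω => (Finset.sum_filter_add_sum_filter_not t _ _).symm
    have hA_le_d : ∀ ω, (∑ j ∈ tA, (w j : ℝ) * (X j ω : ℝ)) ≤ d := by
      intro ω
      have h1 : (∑ j ∈ tA, (w j : ℝ) * (X j ω : ℝ)) ≤ ∑ j ∈ tA, (w j : ℝ) := hsumle tA ω
      have h2 : (∑ j ∈ tA, (w j : ℝ)) ≤ ∑ j ∈ Finset.univ.filter (fun j => D.Adj i j), (w j : ℝ) :=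
        Finset.sum_le_sum_of_subset_of_nonneg
          (Finset.filter_subset_filter _ (Finset.subset_univ t)) (fun j _ _ => hw0 j)
      have h3 : (∑ j ∈ Finset.univ.filter (fun j => D.Adj i j), (w j : ℝ)) =
          ∑ j : Fin n, (if D.Adj i j then (w j : ℝ) else 0) := Finset.sum_filter _ _
      have h4 := hd i
      have h5 := hw0 i
      linarith
    -- pointwise: X_i e^{l St} ≤ e^{l d} (X_i e^{l B})
    have hsplit : ∀ ω, (X i ω : ℝ) * Real.exp (l * ∑ j ∈ t, (w j : ℝ) * (X j ω : ℝ)) ≤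
        Real.exp (l * d) * ((X i ω : ℝ) * Real.exp (l * ∑ j ∈ tB, (w j : ℝ) * (X j ω : ℝ))) := by
      intro ω
      rw [hABsum ω, mul_add, Real.exp_add]
      have hA : Real.exp (l * ∑ j ∈ tA, (w j : ℝ) * (X j ω : ℝ)) ≤ Real.exp (l * d) :=
        Real.exp_le_exp.2 (mul_le_mul_of_nonneg_left (hA_le_d ω) hl)
      have hmul := mul_le_mul_of_nonneg_left hA
        (mul_nonneg (hXr0 i ω) (Real.exp_nonneg (l * ∑ j ∈ tB, (w j : ℝ) * (X j ω : ℝ))))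
      linear_combination hmul
    have h2 : ∫ ω, (X i ω : ℝ) * Real.exp (l * ∑ j ∈ t, (w j : ℝ) * (X j ω : ℝ)) ∂μ ≤
        Real.exp (l * d) *
          ∫ ω, (X i ω : ℝ) * Real.exp (l * ∑ j ∈ tB, (w j : ℝ) * (X j ω : ℝ)) ∂μ := by
      have := integral_mono (hint_mul t i) ((hint_mul tB i).const_mul _) hsplit
      rwa [integral_const_mul] at this
    -- independence step
    have h3 : ∫ ω, (X i ω : ℝ) * Real.exp (l * ∑ j ∈ tB, (w j : ℝ) * (X j ω : ℝ)) ∂μ =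
        p * ∫ ω, Real.exp (l * ∑ j ∈ tB, (w j : ℝ) * (X j ω : ℝ)) ∂μ := by
      set S := {j : Fin n // j ≠ i ∧ ¬D.Adj i j} with hS_def
      set g : (S → ℕ) → ℝ := fun v =>
        Real.exp (l * ∑ j ∈ Finset.univ.filter (fun j : S => j.1 ∈ t), (w j.1 : ℝ) * (v j : ℝ))
        with hg_def
      have hgmeas : Measurable g :=
        Real.measurable_exp.comp (measurable_const.mul (Finset.measurable_sum _
          fun j _ => (measurable_from_top.comp (measurable_pi_apply j)).const_mul _))
      have hsum_eq : ∀ ω : Ω,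
          (∑ j ∈ Finset.univ.filter (fun j : S => j.1 ∈ t), (w j.1 : ℝ) * (X j.1 ω : ℝ)) =
            ∑ j ∈ tB, (w j : ℝ) * (X j ω : ℝ) := by
        intro ω
        have e1 : (∑ j ∈ Finset.univ.filter (fun j : S => j.1 ∈ t), (w j.1 : ℝ) * (X j.1 ω : ℝ))
            = ∑ j : S, (if j.1 ∈ t then (w j.1 : ℝ) * (X j.1 ω : ℝ) else 0) :=
          Finset.sum_filter _ _
        have e2 : (∑ a ∈ Finset.univ.filter (fun a : Fin n => a ≠ i ∧ ¬D.Adj i a),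
              (if a ∈ t then (w a : ℝ) * (X a ω : ℝ) else 0))
            = ∑ j : S, (if j.1 ∈ t then (w j.1 : ℝ) * (X j.1 ω : ℝ) else 0) :=
          Finset.sum_subtype _ (by simp) _
        have e3 : (∑ a ∈ Finset.univ.filter (fun a : Fin n => a ≠ i ∧ ¬D.Adj i a),
              (if a ∈ t then (w a : ℝ) * (X a ω : ℝ) else 0))
            = ∑ a ∈ (Finset.univ.filter (fun a : Fin n => a ≠ i ∧ ¬D.Adj i a)).filter
                (fun a => a ∈ t), (w a : ℝ) * (X a ω : ℝ) := (Finset.sum_filter _ _).symm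
        have e4 : (Finset.univ.filter (fun a : Fin n => a ≠ i ∧ ¬D.Adj i a)).filter
            (fun a => a ∈ t) = tB := by
          ext a
          simp only [htB_def, Finset.mem_filter, Finset.mem_univ, true_and]
          constructor
          · rintro ⟨⟨-, h2⟩, h3⟩; exact ⟨h3, h2⟩
          · rintro ⟨h1, h2⟩; exact ⟨⟨fun h => hi (h ▸ h1), h2⟩, h1⟩
        rw [e1, ← e2, e3, e4]
      have hcomp : (fun ω => Real.exp (l * ∑ j ∈ tB, (w j : ℝ) * (X j ω : ℝ))) =
          g ∘ (fun ω (j : S) => X j.1 ω) := by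
        funext ω
        simp only [hg_def, Function.comp_apply, hsum_eq ω]
      have hindep : IndepFun (fun ω => (X i ω : ℝ))
          (fun ω => Real.exp (l * ∑ j ∈ tB, (w j : ℝ) * (X j ω : ℝ))) μ := by
        rw [hcomp]
        exact (hind i).comp measurable_from_top hgmeas
      have := hindep.integral_fun_mul_eq_mul_integral (hXr i).aestronglyMeasurable
        ((hmeas_exp tB).aestronglyMeasurable)
      simpa using this
    have h4 : ∫ ω, Real.exp (l * ∑ j ∈ tB, (w j : ℝ) * (X j ω : ℝ)) ∂μ ≤ Et := by
      refine integral_mono (hint_exp tB) (hint_exp t) ?_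
      intro ω
      apply Real.exp_le_exp.2
      apply mul_le_mul_of_nonneg_left ?_ hl
      rw [hABsum ω]
      have := hsum0 tA ω
      linarith
    have hp0 : (0:ℝ) ≤ p := integral_nonneg fun ω => hXr0 i ω
    have hK0 : (0:ℝ) ≤ K := by
      have h := Real.one_le_exp (mul_nonneg hl (hw0 i))
      simp only [hK_def]; linarith
    have hEt0 : (0:ℝ) ≤ Et := integral_nonneg fun ω => Real.exp_nonneg _
    have hIle : ∫ ω, (X i ω : ℝ) * Real.exp (l * ∑ j ∈ t, (w j : ℝ) * (X j ω : ℝ)) ∂μ ≤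
        Real.exp (l * d) * (p * Et) := by
      refine h2.trans ?_
      rw [h3]
      exact mul_le_mul_of_nonneg_left (mul_le_mul_of_nonneg_left h4 hp0) (Real.exp_nonneg _)
    calc ∫ ω, Real.exp (l * ∑ j ∈ insert i t, (w j : ℝ) * (X j ω : ℝ)) ∂μ
        = Et + K * ∫ ω, (X i ω : ℝ) *
            Real.exp (l * ∑ j ∈ t, (w j : ℝ) * (X j ω : ℝ)) ∂μ := hEeq
      _ ≤ Et + K * (Real.exp (l * d) * (p * Et)) := by
          have := mul_le_mul_of_nonneg_left hIle hK0
          linarith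
      _ = (1 + p * K * Real.exp (l * d)) * Et := by ring
      _ ≤ Real.exp (p * K * Real.exp (l * d)) *
            Real.exp (∑ j ∈ t, (∫ ω, (X j ω : ℝ) ∂μ) * (Real.exp (l * (w j : ℝ)) - 1) *
              Real.exp (l * d)) := by
          refine mul_le_mul ?_ ih hEt0 (Real.exp_nonneg _)
          have := Real.add_one_le_exp (p * K * Real.exp (l * d))
          linarith
      _ = _ := by
          rw [← Real.exp_add, Finset.sum_insert hi]


set_option maxHeartbeats 1000000 in
/-- Weighted Chernoff bound with bounded dependence: there are universal
constants `C, c > 0` such that for 0-1 random variables `X i` with positive integer weights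
`w i`, a dependency graph `D` (each `X i` is independent of the joint family of the `X j`
with `j ≠ i` not adjacent to `i`), `μ₀ ≥ E[∑ wᵢXᵢ]`, and `d ≥ 1` bounding the weight of
every closed neighborhood, we have
`P[∑ wᵢXᵢ ≥ (1+δ)μ₀] ≤ C·d·exp(-c·δ²·μ₀/d)` for all `0 < δ ≤ 1`. -/
theorem stmt_2 : ∃ C > (0 : ℝ), ∃ c > (0 : ℝ),
    ∀ (Ω : Type) (_ : MeasurableSpace Ω) (μ : Measure Ω), IsProbabilityMeasure μ →
    ∀ (n : ℕ) (X : Fin n → Ω → ℕ) (w : Fin n → ℕ),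
      (∀ i, Measurable (X i)) →
      (∀ i ω, X i ω = 0 ∨ X i ω = 1) →
      (∀ i, 0 < w i) →
    ∀ D : SimpleGraph (Fin n),
      (∀ i : Fin n, IndepFun (X i)
        (fun ω (j : {j : Fin n // j ≠ i ∧ ¬D.Adj i j}) => X j.1 ω) μ) →
    ∀ μ₀ d : ℝ,
      (∫⁻ ω, ∑ i, (w i : ℝ≥0∞) * (X i ω : ℝ≥0∞) ∂μ) ≤ ENNReal.ofReal μ₀ →
      1 ≤ d →
      (∀ i : Fin n, (w i : ℝ) + ∑ j : Fin n, (if D.Adj i j then (w j : ℝ) else 0) ≤ d) →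
    ∀ δ : ℝ, 0 < δ → δ ≤ 1 →
      μ {ω | (1 + δ) * μ₀ ≤ ∑ i, (w i : ℝ) * (X i ω : ℝ)} ≤
        ENNReal.ofReal (C * d * Real.exp (-(c * δ ^ 2 * μ₀ / d))) := by
  refine ⟨1, one_pos, 1/16, by norm_num, ?_⟩
  intro Ω mΩ μ hprob n X w hXm hX01 hw D hind μ₀ d hμ₀ hd1 hdnb δ hδ0 hδ1
  have hd0 : (0:ℝ) < d := lt_of_lt_of_le one_pos hd1
  have hXr : ∀ i, Measurable fun ω => (X i ω : ℝ) := fun i => measurable_from_top.comp (hXm i)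
  have hXr0 : ∀ i ω, (0:ℝ) ≤ (X i ω : ℝ) := fun i ω => Nat.cast_nonneg _
  have hXr1 : ∀ i ω, (X i ω : ℝ) ≤ 1 := by
    intro i ω; rcases hX01 i ω with h | h <;> simp [h]
  have hw0 : ∀ i, (0:ℝ) ≤ (w i : ℝ) := fun i => Nat.cast_nonneg _
  rcases le_or_gt μ₀ 0 with hneg | hpos
  · -- trivial case μ₀ ≤ 0
    refine le_trans prob_le_one ?_
    rw [← ENNReal.ofReal_one]
    apply ENNReal.ofReal_le_ofReal
    have harg : (0:ℝ) ≤ -(1/16 * δ ^ 2 * μ₀ / d) := by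
      have h1 : 1/16 * δ ^ 2 * μ₀ ≤ 0 := by nlinarith
      have := div_nonpos_of_nonpos_of_nonneg h1 hd0.le
      linarith
    have hexp : (1:ℝ) ≤ Real.exp (-(1/16 * δ ^ 2 * μ₀ / d)) := Real.one_le_exp harg
    nlinarith
  · -- main case μ₀ > 0
    obtain ⟨l, hl_def⟩ : ∃ l : ℝ, l = δ / (8 * d) := ⟨_, rfl⟩
    have hl0 : 0 ≤ l := by rw [hl_def]; positivity
    have hld : l * d = δ / 8 := by rw [hl_def]; field_simp
    -- integrability of the exponential
    have hmeas_sum : Measurable fun ω => ∑ i, (w i : ℝ) * (X i ω : ℝ) :=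
      Finset.measurable_sum _ fun j _ => (hXr j).const_mul _
    have hsumle : ∀ ω, (∑ i, (w i : ℝ) * (X i ω : ℝ)) ≤ ∑ i, (w i : ℝ) :=
      fun ω => Finset.sum_le_sum fun j _ => mul_le_of_le_one_right (hw0 j) (hXr1 j ω)
    have hint : Integrable (fun ω => Real.exp (l * ∑ i, (w i : ℝ) * (X i ω : ℝ))) μ := by
      refine integrable_of_abs_le' (Real.measurable_exp.comp (measurable_const.mul hmeas_sum))
        (M := Real.exp (l * ∑ i, (w i : ℝ))) ?_
      intro ω
      rw [abs_of_nonneg (Real.exp_nonneg _)]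
      exact Real.exp_le_exp.2 (mul_le_mul_of_nonneg_left (hsumle ω) hl0)
    -- Markov / Chernoff
    have markov := measure_ge_le_exp_mul_mgf (μ := μ)
      (X := fun ω => ∑ i, (w i : ℝ) * (X i ω : ℝ)) (t := l) ((1 + δ) * μ₀) hl0 hint
    -- mgf bound from the key lemma
    have hmgf : mgf (fun ω => ∑ i, (w i : ℝ) * (X i ω : ℝ)) μ l ≤
        Real.exp (∑ i, (∫ ω, (X i ω : ℝ) ∂μ) * (Real.exp (l * (w i : ℝ)) - 1) *
          Real.exp (l * d)) :=
      mgf_step_bound μ X w hXm hX01 D hind d l hl0 hdnb Finset.univ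
    -- expectation bound: ∑ w i * p i ≤ μ₀
    have hXint : ∀ i, Integrable (fun ω => (X i ω : ℝ)) μ := by
      intro i
      refine integrable_of_abs_le' (hXr i) (M := 1) ?_
      intro ω; rw [abs_of_nonneg (hXr0 i ω)]; exact hXr1 i ω
    have hp0 : ∀ i, (0:ℝ) ≤ ∫ ω, (X i ω : ℝ) ∂μ := fun i => integral_nonneg fun ω => hXr0 i ω
    have hkey : ∀ i, ∫⁻ ω, ((X i ω : ℝ≥0∞)) ∂μ = ENNReal.ofReal (∫ ω, (X i ω : ℝ) ∂μ) := by
      intro i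
      rw [ofReal_integral_eq_lintegral_ofReal (hXint i) (ae_of_all _ fun ω => hXr0 i ω)]
      congr 1
      funext ω
      exact (ENNReal.ofReal_natCast _).symm
    have hsum_wp : (∑ i, (w i : ℝ) * ∫ ω, (X i ω : ℝ) ∂μ) ≤ μ₀ := by
      have hlin : (∑ i, (w i : ℝ≥0∞) * ∫⁻ ω, (X i ω : ℝ≥0∞) ∂μ) ≤ ENNReal.ofReal μ₀ := by
        have hm1 : ∀ i : Fin n, Measurable fun ω => ((X i ω : ℝ≥0∞)) :=
          fun i => measurable_from_top.comp (hXm i)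
        have hlsum : (∫⁻ ω, ∑ i, (w i : ℝ≥0∞) * (X i ω : ℝ≥0∞) ∂μ) =
            ∑ i, ∫⁻ ω, (w i : ℝ≥0∞) * (X i ω : ℝ≥0∞) ∂μ :=
          lintegral_finset_sum _ (fun i _ => (hm1 i).const_mul _)
        rw [hlsum] at hμ₀
        calc (∑ i, (w i : ℝ≥0∞) * ∫⁻ ω, (X i ω : ℝ≥0∞) ∂μ)
            = ∑ i, ∫⁻ ω, (w i : ℝ≥0∞) * (X i ω : ℝ≥0∞) ∂μ := by
              refine Finset.sum_congr rfl fun i _ => ?_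
              rw [lintegral_const_mul _ (hm1 i)]
          _ ≤ ENNReal.ofReal μ₀ := hμ₀
      have hofr : ENNReal.ofReal (∑ i, (w i : ℝ) * ∫ ω, (X i ω : ℝ) ∂μ) ≤
          ENNReal.ofReal μ₀ := by
        rw [ENNReal.ofReal_sum_of_nonneg (fun i _ => mul_nonneg (hw0 i) (hp0 i))]
        refine le_trans (le_of_eq ?_) hlin
        refine Finset.sum_congr rfl fun i _ => ?_
        rw [ENNReal.ofReal_mul (hw0 i), hkey i, ENNReal.ofReal_natCast]
      exact (ENNReal.ofReal_le_ofReal_iff hpos.le).1 hofr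
    -- convexity bound on each term
    have hconv : ∀ i : Fin n,
        (∫ ω, (X i ω : ℝ) ∂μ) * (Real.exp (l * (w i : ℝ)) - 1) * Real.exp (l * d) ≤
        (Real.exp (l * d) * (Real.exp (l * d) - 1) / d) * ((w i : ℝ) * ∫ ω, (X i ω : ℝ) ∂μ) := by
      intro i
      have hwi_le : (w i : ℝ) ≤ d := by
        have h1 := hdnb i
        have h2 : (0:ℝ) ≤ ∑ j : Fin n, (if D.Adj i j then (w j : ℝ) else 0) :=
          Finset.sum_nonneg fun j _ => by split <;> simp [hw0 j]
        linarith
      have ht0 : (0:ℝ) ≤ (w i : ℝ) / d := div_nonneg (hw0 i) hd0.le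
      have ht1 : (w i : ℝ) / d ≤ 1 := (div_le_one hd0).2 hwi_le
      have hcv : Real.exp (l * (w i : ℝ)) - 1 ≤ (w i : ℝ) / d * (Real.exp (l * d) - 1) := by
        have hconvex := convexOn_exp.2 (Set.mem_univ (0:ℝ)) (Set.mem_univ (l * d))
          (by linarith : (0:ℝ) ≤ 1 - (w i : ℝ) / d) ht0 (by ring)
        simp only [smul_eq_mul, mul_zero, zero_add, Real.exp_zero, mul_one] at hconvex
        have harg : (w i : ℝ) / d * (l * d) = l * (w i : ℝ) := by field_simp
        rw [harg] at hconvex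
        linarith
      calc (∫ ω, (X i ω : ℝ) ∂μ) * (Real.exp (l * (w i : ℝ)) - 1) * Real.exp (l * d)
          ≤ (∫ ω, (X i ω : ℝ) ∂μ) * ((w i : ℝ) / d * (Real.exp (l * d) - 1)) *
            Real.exp (l * d) := by
            apply mul_le_mul_of_nonneg_right (mul_le_mul_of_nonneg_left hcv (hp0 i))
              (Real.exp_nonneg _)
        _ = (Real.exp (l * d) * (Real.exp (l * d) - 1) / d) *
            ((w i : ℝ) * ∫ ω, (X i ω : ℝ) ∂μ) := by ring
    have hR0 : (0:ℝ) ≤ Real.exp (l * d) * (Real.exp (l * d) - 1) / d := by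
      have h1 : (1:ℝ) ≤ Real.exp (l * d) := Real.one_le_exp (mul_nonneg hl0 hd0.le)
      have h2 : (0:ℝ) ≤ Real.exp (l * d) := Real.exp_nonneg _
      apply div_nonneg (mul_nonneg h2 (by linarith)) hd0.le
    have hQ : (∑ i, (∫ ω, (X i ω : ℝ) ∂μ) * (Real.exp (l * (w i : ℝ)) - 1) *
          Real.exp (l * d)) ≤
        Real.exp (l * d) * (Real.exp (l * d) - 1) / d * μ₀ := by
      refine (Finset.sum_le_sum fun i _ => hconv i).trans ?_
      rw [← Finset.mul_sum]
      exact mul_le_mul_of_nonneg_left hsum_wp hR0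
    -- numeric core inequality
    have hcore : Real.exp (l * d) * (Real.exp (l * d) - 1) - (1 + δ) * (l * d) ≤ -(δ ^ 2 / 16) := by
      rw [hld]
      set a : ℝ := Real.exp (δ / 8) with ha_def
      have ha0 : (0:ℝ) < a := Real.exp_pos _
      have h1 : a - 1 ≤ δ / 8 * a := by
        have hh := Real.add_one_le_exp (-(δ / 8))
        rw [Real.exp_neg, ← ha_def] at hh
        have hh2 : a * (-(δ / 8) + 1) ≤ a * a⁻¹ := mul_le_mul_of_nonneg_left hh ha0.le
        rw [mul_inv_cancel₀ ha0.ne'] at hh2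
        nlinarith
      have ha2 : a ^ 2 = Real.exp (δ / 4) := by
        rw [sq, ha_def, ← Real.exp_add]; ring_nf
      have h2 : a ^ 2 * (1 - δ / 4) ≤ 1 := by
        have hh := Real.add_one_le_exp (-(δ / 4))
        rw [Real.exp_neg, ← ha2] at hh
        have hh2 : a ^ 2 * (-(δ / 4) + 1) ≤ a ^ 2 * (a ^ 2)⁻¹ :=
          mul_le_mul_of_nonneg_left hh (by positivity)
        rw [mul_inv_cancel₀ (by positivity : (a:ℝ) ^ 2 ≠ 0)] at hh2
        nlinarith
      have h3 : a * (a - 1) ≤ δ / 8 * a ^ 2 := by nlinarith [h1, ha0.le]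
      have h4 : a ^ 2 ≤ 1 + δ / 2 := by nlinarith [h2, hδ0.le, hδ1]
      nlinarith [h3, h4, hδ0.le, hδ1]
    -- assemble the real-valued bound
    have hreal : Real.exp (-l * ((1 + δ) * μ₀)) *
        mgf (fun ω => ∑ i, (w i : ℝ) * (X i ω : ℝ)) μ l ≤
        1 * d * Real.exp (-(1 / 16 * δ ^ 2 * μ₀ / d)) := by
      have step1 : Real.exp (-l * ((1 + δ) * μ₀)) *
          mgf (fun ω => ∑ i, (w i : ℝ) * (X i ω : ℝ)) μ l ≤
          Real.exp (-l * ((1 + δ) * μ₀)) *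
            Real.exp (Real.exp (l * d) * (Real.exp (l * d) - 1) / d * μ₀) :=
        mul_le_mul_of_nonneg_left (hmgf.trans (Real.exp_le_exp.2 hQ)) (Real.exp_nonneg _)
      refine step1.trans ?_
      rw [← Real.exp_add]
      have hm : -l * ((1 + δ) * μ₀) + Real.exp (l * d) * (Real.exp (l * d) - 1) / d * μ₀ =
          μ₀ / d * (Real.exp (l * d) * (Real.exp (l * d) - 1) - (1 + δ) * (l * d)) := by
        field_simp
        ring
      have hmono : μ₀ / d * (Real.exp (l * d) * (Real.exp (l * d) - 1) - (1 + δ) * (l * d)) ≤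
          μ₀ / d * (-(δ ^ 2 / 16)) :=
        mul_le_mul_of_nonneg_left hcore (div_nonneg hpos.le hd0.le)
      have heq2 : μ₀ / d * (-(δ ^ 2 / 16)) = -(1 / 16 * δ ^ 2 * μ₀ / d) := by ring
      have hexp_le : Real.exp (-l * ((1 + δ) * μ₀) +
          Real.exp (l * d) * (Real.exp (l * d) - 1) / d * μ₀) ≤
          Real.exp (-(1 / 16 * δ ^ 2 * μ₀ / d)) := by
        apply Real.exp_le_exp.2
        rw [hm]
        linarith [hmono, heq2.le, heq2.ge]
      refine hexp_le.trans ?_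
      rw [one_mul]
      exact le_mul_of_one_le_left (Real.exp_pos _).le hd1
    -- conclude
    have hfin : (μ {ω | (1 + δ) * μ₀ ≤ ∑ i, (w i : ℝ) * (X i ω : ℝ)}).toReal ≤
        1 * d * Real.exp (-(1 / 16 * δ ^ 2 * μ₀ / d)) := le_trans markov hreal
    calc μ {ω | (1 + δ) * μ₀ ≤ ∑ i, (w i : ℝ) * (X i ω : ℝ)}
        = ENNReal.ofReal ((μ {ω | (1 + δ) * μ₀ ≤ ∑ i, (w i : ℝ) * (X i ω : ℝ)}).toReal) :=
          (ENNReal.ofReal_toReal (measure_ne_top μ _)).symm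
      _ ≤ ENNReal.ofReal (1 * d * Real.exp (-(1 / 16 * δ ^ 2 * μ₀ / d))) :=
          ENNReal.ofReal_le_ofReal hfin
end

section
/- There exist universal constants C > 0 and c > 0 such that the following holds. Let 0 < p ≤ 1, let X_1, …, X_n be geometric random variables with parameter p whose dependency graph has maximum degree at most d, where d ≥ 1, and set X = Σ_{i=1}^n X_i. Suppose μ ≥ E[X] and δ > 1/p − 1. Then P[X ≥ μ + δn] ≤ C·d·exp(−c·p²δn/d). -/
open MeasureTheory ProbabilityTheory
open scoped Classical ENNReal

/-- Greedy coloring: a graph on `Fin n` with all degrees ≤ `D` has a proper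
coloring with `D+1` colors. -/
lemma greedy_coloring {n m : ℕ} (hm0 : 0 < m) (G : SimpleGraph (Fin n))
    (hdeg : ∀ i : Fin n, (Finset.univ.filter (fun j => G.Adj i j)).card < m) :
    ∃ c : Fin n → Fin m, ∀ i j, G.Adj i j → c i ≠ c j := by
  have key : ∀ t : ℕ, ∃ c : Fin n → Fin m,
      ∀ i j : Fin n, i.val < t → j.val < t → G.Adj i j → c i ≠ c j := by
    intro t
    induction t with
    | zero => exact ⟨fun _ => ⟨0, hm0⟩, fun i j hi => by omega⟩
    | succ t ih =>
      obtain ⟨c, hc⟩ := ih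
      by_cases ht : t < n
      · -- recolor vertex ⟨t, ht⟩
        set v : Fin n := ⟨t, ht⟩
        set used : Finset (Fin m) :=
          (Finset.univ.filter (fun j => G.Adj v j ∧ j.val < t)).image c with hused
        have hcard : used.card < m := by
          calc used.card ≤ (Finset.univ.filter (fun j => G.Adj v j ∧ j.val < t)).card :=
                Finset.card_image_le
            _ ≤ (Finset.univ.filter (fun j => G.Adj v j)).card := by
                apply Finset.card_le_card
                intro x hx
                simp only [Finset.mem_filter] at hx ⊢
                exact ⟨hx.1, hx.2.1⟩
            _ < m := hdeg v
        have hex : ∃ x : Fin m, x ∉ used := by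
          by_contra h
          push_neg at h
          have : (Finset.univ : Finset (Fin m)).card ≤ used.card :=
            Finset.card_le_card (fun x _ => h x)
          simp [Fintype.card_fin] at this
          omega
        obtain ⟨x, hx⟩ := hex
        refine ⟨Function.update c v x, ?_⟩
        intro i j hi hj hadj
        have hne : i ≠ j := G.ne_of_adj hadj
        by_cases hiv : i = v
        · subst hiv
          rw [Function.update_self, Function.update_of_ne hne.symm]
          intro heq
          apply hx
          rw [hused]
          apply Finset.mem_image.2
          refine ⟨j, ?_, heq.symm⟩
          simp only [Finset.mem_filter, Finset.mem_univ, true_and]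
          refine ⟨hadj, ?_⟩
          -- j.val < t since j ≠ v and j.val < t+1
          have : j.val ≠ t := fun h => hne (Fin.ext h.symm)
          omega
        · by_cases hjv : j = v
          · subst hjv
            rw [Function.update_self, Function.update_of_ne hne]
            intro heq
            apply hx
            rw [hused]
            exact Finset.mem_image.2 ⟨i, by
              simp only [Finset.mem_filter, Finset.mem_univ, true_and]
              refine ⟨G.adj_symm hadj, ?_⟩
              have : i.val ≠ t := fun h => hiv (Fin.ext h)
              omega, heq⟩
          · rw [Function.update_of_ne hiv, Function.update_of_ne hjv]
            have hit : i.val < t := by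
              have : i.val ≠ t := fun h => hiv (Fin.ext h)
              omega
            have hjt : j.val < t := by
              have : j.val ≠ t := fun h => hjv (Fin.ext h)
              omega
            exact hc i j hit hjt hadj
      · -- t ≥ n, nothing changes
        refine ⟨c, fun i j hi hj hadj => hc i j ?_ ?_ hadj⟩ <;> omega
  obtain ⟨c, hc⟩ := key n
  exact ⟨c, fun i j hadj => hc i j i.isLt j.isLt hadj⟩

/-- Product rule for the expectation of a product over an independent set of a
dependency graph. -/
lemma lintegral_prod_indep {Ω : Type} [MeasurableSpace Ω] (μ : Measure Ω)
    [IsProbabilityMeasure μ] {n : ℕ} (X : Fin n → Ω → ℕ)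
    (hX : ∀ i, Measurable (X i)) (D : SimpleGraph (Fin n))
    (hInd : ∀ i : Fin n, IndepFun (X i)
      (fun ω (j : {j : Fin n // j ≠ i ∧ ¬D.Adj i j}) => X j.1 ω) μ)
    (φ : ℕ → ℝ≥0∞) (S : Finset (Fin n))
    (hS : ∀ i ∈ S, ∀ j ∈ S, ¬D.Adj i j) :
    ∫⁻ ω, ∏ i ∈ S, φ (X i ω) ∂μ = ∏ i ∈ S, ∫⁻ ω, φ (X i ω) ∂μ := by
  classical
  induction S using Finset.induction with
  | empty => simp
  | @insert a s ha ih =>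
    have hprop : ∀ j ∈ s, j ≠ a ∧ ¬D.Adj a j := by
      intro j hj
      refine ⟨fun h => ha (h ▸ hj), ?_⟩
      exact hS a (Finset.mem_insert_self a s) j (Finset.mem_insert_of_mem hj)
    have hφ : Measurable φ := measurable_from_top
    set F : Ω → ({j : Fin n // j ≠ a ∧ ¬D.Adj a j} → ℕ) :=
      fun ω j => X j.1 ω with hF
    have hFmeas : Measurable F := measurable_pi_lambda _ (fun j => hX j.1)
    set ψ : ({j : Fin n // j ≠ a ∧ ¬D.Adj a j} → ℕ) → ℝ≥0∞ :=
      fun v => ∏ j ∈ s, if h : (j ≠ a ∧ ¬D.Adj a j) then φ (v ⟨j, h⟩) else 1 with hψ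
    have hψmeas : Measurable ψ := by
      apply Finset.measurable_prod
      intro j _
      by_cases h : (j ≠ a ∧ ¬D.Adj a j)
      · simp only [dif_pos h]
        exact hφ.comp (measurable_pi_apply _)
      · simp only [dif_neg h]
        exact measurable_const
    have hcompind : IndepFun (φ ∘ (X a)) (ψ ∘ F) μ := (hInd a).comp hφ hψmeas
    have hψF : ∀ ω, ψ (F ω) = ∏ j ∈ s, φ (X j ω) := by
      intro ω
      rw [hψ]
      apply Finset.prod_congr rfl
      intro j hj
      rw [dif_pos (hprop j hj)]
    have h1 : (fun ω => ∏ i ∈ insert a s, φ (X i ω))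
        = (φ ∘ (X a)) * (ψ ∘ F) := by
      funext ω
      simp only [Finset.prod_insert ha, Pi.mul_apply, Function.comp_apply, hψF]
    rw [Finset.prod_insert ha, ← ih (fun i hi j hj =>
      hS i (Finset.mem_insert_of_mem hi) j (Finset.mem_insert_of_mem hj))]
    calc ∫⁻ ω, ∏ i ∈ insert a s, φ (X i ω) ∂μ
        = ∫⁻ ω, ((φ ∘ (X a)) * (ψ ∘ F)) ω ∂μ := by rw [h1]
      _ = (∫⁻ ω, (φ ∘ (X a)) ω ∂μ) * ∫⁻ ω, (ψ ∘ F) ω ∂μ :=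
          lintegral_mul_eq_lintegral_mul_lintegral_of_indepFun
            (hφ.comp (hX a)) (hψmeas.comp hFmeas) hcompind
      _ = (∫⁻ ω, φ (X a ω) ∂μ) * ∫⁻ ω, ∏ j ∈ s, φ (X j ω) ∂μ := by
          simp only [Function.comp_apply, hψF]

lemma geom_tsum_one {p : ℝ} (hp : 0 < p) (hp1 : p ≤ 1) :
    ∑' j : ℕ, ENNReal.ofReal ((1 - p) ^ j * p) = 1 := by
  have hq0 : (0:ℝ) ≤ 1 - p := by linarith
  have hq1 : 1 - p < 1 := by linarith
  have hsum : Summable (fun j : ℕ => (1 - p) ^ j * p) :=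
    (summable_geometric_of_lt_one hq0 hq1).mul_right p
  rw [← ENNReal.ofReal_tsum_of_nonneg (fun j => by positivity) hsum]
  rw [tsum_mul_right, tsum_geometric_of_lt_one hq0 hq1]
  have : (1 - (1 - p))⁻¹ * p = 1 := by
    field_simp
    rw [sub_sub_cancel, div_self hp.ne']
  rw [this, ENNReal.ofReal_one]

/-- Distribution facts: ∫⁻ φ(X) for a geometric variable. -/
lemma geom_lintegral {Ω : Type} [MeasurableSpace Ω] (μ : Measure Ω)
    [IsProbabilityMeasure μ] {p : ℝ} (hp : 0 < p) (hp1 : p ≤ 1)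
    (Y : Ω → ℕ) (hY : Measurable Y)
    (hdist : ∀ k : ℕ, 1 ≤ k → μ {ω | Y ω = k} = ENNReal.ofReal ((1 - p) ^ (k - 1) * p))
    (φ : ℕ → ℝ≥0∞) :
    ∫⁻ ω, φ (Y ω) ∂μ = ∑' j : ℕ, φ (j + 1) * ENNReal.ofReal ((1 - p) ^ j * p) := by
  have hsingle : ∀ k : ℕ, (μ.map Y) {k} = μ {ω | Y ω = k} := by
    intro k
    rw [Measure.map_apply hY (measurableSet_singleton k)]
    rfl
  have hmass : ∑' k : ℕ, (μ.map Y) {k} = 1 := by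
    have : (μ.map Y) Set.univ = 1 := by
      rw [Measure.map_apply hY MeasurableSet.univ]
      simp
    rw [← this]
    have hu : (⋃ k : ℕ, ({k} : Set ℕ)) = Set.univ := Set.iUnion_of_singleton ℕ
    rw [← hu, measure_iUnion (fun i j hij => Set.disjoint_singleton.mpr hij)
      (fun k => measurableSet_singleton k)]
  have hzero : (μ.map Y) {0} = 0 := by
    have hshift : ∑' j : ℕ, (μ.map Y) {j + 1} = 1 := by
      have : ∀ j : ℕ, (μ.map Y) {j + 1} = ENNReal.ofReal ((1 - p) ^ j * p) := by
        intro j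
        rw [hsingle, hdist (j + 1) (by omega)]
        simp
      rw [tsum_congr this, geom_tsum_one hp hp1]
    have := hmass
    rw [tsum_eq_zero_add' ENNReal.summable, hshift] at this
    -- this : (μ.map Y) {0} + 1 = 1
    nth_rewrite 2 [← zero_add (1 : ℝ≥0∞)] at this
    exact (ENNReal.add_left_inj ENNReal.one_ne_top).mp this
  calc ∫⁻ ω, φ (Y ω) ∂μ = ∫⁻ k, φ k ∂(μ.map Y) := (lintegral_map (measurable_from_top) hY).symm
    _ = ∑' k : ℕ, φ k * (μ.map Y) {k} := lintegral_countable' φ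
    _ = φ 0 * (μ.map Y) {0} + ∑' j : ℕ, φ (j + 1) * (μ.map Y) {j + 1} :=
        tsum_eq_zero_add' ENNReal.summable
    _ = ∑' j : ℕ, φ (j + 1) * ENNReal.ofReal ((1 - p) ^ j * p) := by
        rw [hzero, mul_zero, zero_add]
        apply tsum_congr
        intro j
        rw [hsingle, hdist (j + 1) (by omega)]
        simp



lemma real_geom_mean {p : ℝ} (hp : 0 < p) (hp1 : p ≤ 1) :
    ∑' j : ℕ, ((j : ℝ) + 1) * ((1 - p) ^ j * p) = 1 / p := by
  set q := 1 - p with hq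
  have hq0 : (0:ℝ) ≤ q := by simp [hq]; linarith
  have hq1 : q < 1 := by simp [hq]; linarith
  have hqn : ‖q‖ < 1 := by rwa [Real.norm_eq_abs, abs_of_nonneg hq0]
  have hs1 : Summable (fun j : ℕ => (j : ℝ) * q ^ j) := by
    have h2 := summable_pow_mul_geometric_of_norm_lt_one (R := ℝ) 1 hqn
    apply h2.congr
    intro j; rw [pow_one]
  have hs2 : Summable (fun j : ℕ => q ^ j) := summable_geometric_of_lt_one hq0 hq1
  have hrw : ∀ j : ℕ, ((j : ℝ) + 1) * (q ^ j * p) = ((j : ℝ) * q ^ j) * p + q ^ j * p := by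
    intro j; ring
  rw [tsum_congr hrw, Summable.tsum_add (hs1.mul_right p) (hs2.mul_right p),
    tsum_mul_right, tsum_mul_right, tsum_coe_mul_geometric_of_norm_lt_one hqn,
    tsum_geometric_of_lt_one hq0 hq1]
  have hp' : 1 - q = p := by simp [hq]
  rw [hp']
  field_simp
  ring

lemma real_geom_mgf {p u : ℝ} (hp : 0 < p) (hp1 : p ≤ 1) (hu : 0 ≤ u)
    (hr : (1 - p) * Real.exp u < 1) :
    ∑' j : ℕ, Real.exp (u * ((j : ℝ) + 1)) * ((1 - p) ^ j * p)
      = p * Real.exp u / (1 - (1 - p) * Real.exp u) := by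
  set q := 1 - p with hqdef
  set r := q * Real.exp u with hrdef
  have hq0 : (0:ℝ) ≤ q := by simp [hqdef]; linarith
  have hr0 : (0:ℝ) ≤ r := mul_nonneg hq0 (Real.exp_pos u).le
  have hrw : ∀ j : ℕ, Real.exp (u * ((j : ℝ) + 1)) * (q ^ j * p)
      = (p * Real.exp u) * r ^ j := by
    intro j
    rw [hrdef, mul_pow, ← Real.exp_nat_mul]
    rw [mul_add, mul_one, Real.exp_add]
    push_cast
    ring_nf
  rw [tsum_congr hrw, tsum_mul_left, tsum_geometric_of_lt_one hr0 hr]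
  rw [div_eq_mul_inv]

lemma geom_mean_lintegral {Ω : Type} [MeasurableSpace Ω] (μ : Measure Ω)
    [IsProbabilityMeasure μ] {p : ℝ} (hp : 0 < p) (hp1 : p ≤ 1)
    (Y : Ω → ℕ) (hY : Measurable Y)
    (hdist : ∀ k : ℕ, 1 ≤ k → μ {ω | Y ω = k} = ENNReal.ofReal ((1 - p) ^ (k - 1) * p)) :
    ∫⁻ ω, (Y ω : ℝ≥0∞) ∂μ = ENNReal.ofReal (1 / p) := by
  have hq0 : (0:ℝ) ≤ 1 - p := by linarith
  rw [geom_lintegral μ hp hp1 Y hY hdist (fun k => (k : ℝ≥0∞))]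
  have hrw : ∀ j : ℕ, ((j + 1 : ℕ) : ℝ≥0∞) * ENNReal.ofReal ((1 - p) ^ j * p)
      = ENNReal.ofReal (((j : ℝ) + 1) * ((1 - p) ^ j * p)) := by
    intro j
    rw [← ENNReal.ofReal_natCast (j+1), ← ENNReal.ofReal_mul (by positivity)]
    congr 1
    push_cast
    ring
  rw [tsum_congr hrw, ← ENNReal.ofReal_tsum_of_nonneg
    (fun j => mul_nonneg (by positivity) (mul_nonneg (pow_nonneg hq0 j) hp.le))
    ?hsum, real_geom_mean hp hp1]
  case hsum =>
    have hq0 : (0:ℝ) ≤ 1 - p := by linarith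
    have hq1 : 1 - p < 1 := by linarith
    have hqn : ‖1 - p‖ < 1 := by rwa [Real.norm_eq_abs, abs_of_nonneg hq0]
    have hs1 : Summable (fun j : ℕ => (j : ℝ) * (1-p) ^ j) := by
      have h2 := summable_pow_mul_geometric_of_norm_lt_one (R := ℝ) 1 hqn
      apply h2.congr
      intro j; rw [pow_one]
    have hs2 : Summable (fun j : ℕ => (1-p) ^ j) := summable_geometric_of_lt_one hq0 hq1
    have : Summable (fun j : ℕ => ((j : ℝ) * (1-p) ^ j) * p + (1-p) ^ j * p) :=
      (hs1.mul_right p).add (hs2.mul_right p)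
    apply this.congr
    intro j; ring

lemma geom_mgf_lintegral {Ω : Type} [MeasurableSpace Ω] (μ : Measure Ω)
    [IsProbabilityMeasure μ] {p u : ℝ} (hp : 0 < p) (hp1 : p ≤ 1) (hu : 0 ≤ u)
    (hr : (1 - p) * Real.exp u < 1)
    (Y : Ω → ℕ) (hY : Measurable Y)
    (hdist : ∀ k : ℕ, 1 ≤ k → μ {ω | Y ω = k} = ENNReal.ofReal ((1 - p) ^ (k - 1) * p)) :
    ∫⁻ ω, ENNReal.ofReal (Real.exp (u * (Y ω : ℝ))) ∂μ
      = ENNReal.ofReal (p * Real.exp u / (1 - (1 - p) * Real.exp u)) := by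
  rw [geom_lintegral μ hp hp1 Y hY hdist (fun k => ENNReal.ofReal (Real.exp (u * (k : ℝ))))]
  have hrw : ∀ j : ℕ, ENNReal.ofReal (Real.exp (u * ((j + 1 : ℕ) : ℝ)))
      * ENNReal.ofReal ((1 - p) ^ j * p)
      = ENNReal.ofReal (Real.exp (u * ((j : ℝ) + 1)) * ((1 - p) ^ j * p)) := by
    intro j
    rw [← ENNReal.ofReal_mul (Real.exp_pos _).le]
    push_cast
    ring_nf
  have hq0 : (0:ℝ) ≤ 1 - p := by linarith
  have hr0 : (0:ℝ) ≤ (1-p) * Real.exp u := mul_nonneg hq0 (Real.exp_pos u).le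
  rw [tsum_congr hrw, ← ENNReal.ofReal_tsum_of_nonneg
    (fun j => mul_nonneg (Real.exp_pos _).le (mul_nonneg (pow_nonneg hq0 j) hp.le))
    ?hsum, real_geom_mgf hp hp1 hu hr]
  case hsum =>
    have : Summable (fun j : ℕ => (p * Real.exp u) * ((1-p) * Real.exp u) ^ j) :=
      ((summable_geometric_of_lt_one hr0 hr)).mul_left _
    apply this.congr
    intro j
    rw [mul_pow, ← Real.exp_nat_mul, mul_add, mul_one, Real.exp_add]
    push_cast
    ring_nf

lemma key_ineq {p δ : ℝ} (hp : 0 < p) (hp1 : p ≤ 1) (hδ : 1 / p - 1 < δ) :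
    0 < 1 - (1 - p) * Real.exp (p / 3) ∧
    p * Real.exp (p / 3) / (1 - (1 - p) * Real.exp (p / 3))
      ≤ Real.exp (1 / 3 + (p / 3 - p ^ 2 / 8) * δ) := by
  set u := p / 3 with hu
  have hu0 : 0 < u := by positivity
  have hu1 : u < 1 := by rw [hu]; linarith
  have h1u : (0:ℝ) < 1 - u := by linarith
  have h1 : (1 - u) * Real.exp u ≤ 1 := by
    have h2 : 1 - u ≤ Real.exp (-u) := by
      have := Real.add_one_le_exp (-u); linarith
    calc (1 - u) * Real.exp u ≤ Real.exp (-u) * Real.exp u :=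
          mul_le_mul_of_nonneg_right h2 (Real.exp_pos u).le
      _ = 1 := by rw [← Real.exp_add]; simp
  have hexp : Real.exp u ≤ 1 / (1 - u) := by
    rw [le_div_iff₀ h1u]
    nlinarith [h1]
  have h6 : (p - u) / (1 - u) = 1 - (1 - p) * (1 / (1 - u)) := by
    field_simp
    ring
  have hden : (p - u) / (1 - u) ≤ 1 - (1 - p) * Real.exp u := by
    have h5 : (1 - p) * Real.exp u ≤ (1 - p) * (1 / (1 - u)) :=
      mul_le_mul_of_nonneg_left hexp (by linarith)
    rw [h6]; linarith
  have hpu : 0 < (p - u) / (1 - u) := by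
    apply div_pos
    · rw [hu]; linarith
    · linarith
  have hden0 : 0 < 1 - (1 - p) * Real.exp u := lt_of_lt_of_le hpu hden
  have h3p : (0:ℝ) < 3 - p := by linarith
  have hprod : (3 - p) / 2 * ((p - u) / (1 - u)) = p := by
    rw [hu]
    rw [div_mul_div_comm, div_eq_iff (by nlinarith : (2 * (1 - p/3)) ≠ 0)]
    ring
  refine ⟨hden0, ?_⟩
  have hGb : p * Real.exp u / (1 - (1 - p) * Real.exp u)
      ≤ (3 - p) / 2 * Real.exp u := by
    rw [div_le_iff₀ hden0]
    calc p * Real.exp u = ((3 - p) / 2 * ((p - u) / (1 - u))) * Real.exp u := by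
          rw [hprod]
      _ = ((3 - p) / 2 * Real.exp u) * ((p - u) / (1 - u)) := by ring
      _ ≤ ((3 - p) / 2 * Real.exp u) * (1 - (1 - p) * Real.exp u) := by
          apply mul_le_mul_of_nonneg_left hden
          positivity
  have hmid : (3 - p) / 2 * Real.exp u ≤ Real.exp (1 / 3 + (p / 3 - p ^ 2 / 8) * (1 / p - 1)) := by
    have hx : (3 - p) / 2 ≤ Real.exp ((1 - p) * (2 / 3 - p / 8)) := by
      have h4 : (1 - p) * (2 / 3 - p / 8) + 1 ≤ Real.exp ((1 - p) * (2 / 3 - p / 8)) :=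
        Real.add_one_le_exp _
      nlinarith [h4]
    calc (3 - p) / 2 * Real.exp u ≤ Real.exp ((1 - p) * (2 / 3 - p / 8)) * Real.exp u :=
          mul_le_mul_of_nonneg_right hx (Real.exp_pos u).le
      _ = Real.exp ((1 - p) * (2 / 3 - p / 8) + u) := (Real.exp_add _ _).symm
      _ = Real.exp (1 / 3 + (p / 3 - p ^ 2 / 8) * (1 / p - 1)) := by
          congr 1
          rw [hu]
          field_simp
          ring
  have hfinal : Real.exp (1 / 3 + (p / 3 - p ^ 2 / 8) * (1 / p - 1))
      ≤ Real.exp (1 / 3 + (p / 3 - p ^ 2 / 8) * δ) := by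
    apply Real.exp_le_exp.2
    have hcoef : 0 ≤ p / 3 - p ^ 2 / 8 := by nlinarith
    nlinarith [mul_le_mul_of_nonneg_left hδ.le hcoef]
  linarith [hGb, hmid, hfinal]


set_option maxHeartbeats 1000000 in
/-- Tail bound for a sum of geometric random variables with a
bounded-degree dependency graph: there are universal constants `C, c > 0` such that
for geometric(p) random variables `X i` whose dependency graph `D` has maximum
degree at most `d` (with `d ≥ 1`), `μ₀ ≥ E[∑ Xᵢ]`, and `δ > 1/p - 1`, we have
`P[∑ Xᵢ ≥ μ₀ + δn] ≤ C·d·exp(-c·p²·δ·n/d)`. -/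
theorem stmt_3 : ∃ C > (0 : ℝ), ∃ c > (0 : ℝ),
    ∀ (Ω : Type) (_ : MeasurableSpace Ω) (μ : Measure Ω), IsProbabilityMeasure μ →
    ∀ p : ℝ, 0 < p → p ≤ 1 →
    ∀ (n : ℕ) (X : Fin n → Ω → ℕ),
      (∀ i, Measurable (X i)) →
      (∀ i, ∀ k : ℕ, 1 ≤ k →
        μ {ω | X i ω = k} = ENNReal.ofReal ((1 - p) ^ (k - 1) * p)) →
    ∀ (D : SimpleGraph (Fin n)) (d : ℝ), 1 ≤ d →
      (∀ i : Fin n, (∑ j : Fin n, if D.Adj i j then (1 : ℝ) else 0) ≤ d) →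
      (∀ i : Fin n, IndepFun (X i)
        (fun ω (j : {j : Fin n // j ≠ i ∧ ¬D.Adj i j}) => X j.1 ω) μ) →
    ∀ μ₀ : ℝ, (∫⁻ ω, ∑ i, (X i ω : ℝ≥0∞) ∂μ) ≤ ENNReal.ofReal μ₀ →
    ∀ δ : ℝ, 1 / p - 1 < δ →
      μ {ω | μ₀ + δ * n ≤ ∑ i, (X i ω : ℝ)} ≤
        ENNReal.ofReal (C * d * Real.exp (-(c * p ^ 2 * δ * n / d))) := by
  refine ⟨1, one_pos, 1/16, by norm_num, ?_⟩
  intro Ω mΩ μ hprob p hp hp1 n X hX hdist D d hd hdeg hInd μ₀ hmean δ hδ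
  haveI := hprob
  have hd0 : (0:ℝ) < d := by linarith
  rcases Nat.eq_zero_or_pos n with hn0 | hn
  · subst hn0
    simp only [Nat.cast_zero, mul_zero, zero_div, neg_zero, Real.exp_zero, mul_one, one_mul]
    calc μ _ ≤ 1 := prob_le_one
      _ ≤ ENNReal.ofReal d := by
          rw [← ENNReal.ofReal_one]
          exact ENNReal.ofReal_le_ofReal hd
  -- main case
  have hδ0 : 0 ≤ δ := by
    have h1 : 1 ≤ 1 / p := by rw [le_div_iff₀ hp]; linarith
    linarith
  set u := p / 3 with hu
  have hu0 : 0 < u := by positivity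
  obtain ⟨hden0, hG⟩ := key_ineq hp hp1 hδ
  set G := p * Real.exp u / (1 - (1 - p) * Real.exp u) with hGdef
  have hGpos : 0 < G := div_pos (by positivity) hden0
  have hr : (1 - p) * Real.exp u < 1 := by linarith
  -- coloring
  have hDnat : ∀ i : Fin n, (Finset.univ.filter (fun j => D.Adj i j)).card ≤ ⌊d⌋₊ := by
    intro i
    apply Nat.le_floor
    have hb : (∑ j : Fin n, if D.Adj i j then (1:ℝ) else 0)
        = ((Finset.univ.filter (fun j => D.Adj i j)).card : ℝ) := by
      simp [Finset.sum_boole]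
    rw [← hb]
    exact hdeg i
  set m := ⌊d⌋₊ + 1 with hm
  have hm0 : 0 < m := Nat.succ_pos _
  obtain ⟨col, hcol⟩ := greedy_coloring hm0 D (fun i => by
    have := hDnat i; omega)
  have hmpos : (0:ℝ) < (m:ℝ) := by positivity
  have hm2d : (m:ℝ) ≤ 2 * d := by
    have h1 : (⌊d⌋₊ : ℝ) ≤ d := Nat.floor_le (by linarith)
    rw [hm]
    push_cast
    linarith
  -- lower bound on μ₀
  have hμ₀ : (n:ℝ) * (1/p) ≤ μ₀ := by
    have hint : (∫⁻ ω, ∑ i, (X i ω : ℝ≥0∞) ∂μ) = ENNReal.ofReal ((n:ℝ) * (1/p)) := by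
      have hXcast : ∀ i : Fin n, Measurable (fun ω => ((X i ω : ℕ) : ℝ≥0∞)) :=
        fun i => measurable_from_top.comp (hX i)
      rw [lintegral_finset_sum _ (fun i _ => hXcast i)]
      rw [Finset.sum_congr rfl
        (fun i _ => geom_mean_lintegral μ hp hp1 (X i) (hX i) (hdist i))]
      rw [Finset.sum_const, Finset.card_univ, Fintype.card_fin, nsmul_eq_mul,
        ← ENNReal.ofReal_natCast n, ← ENNReal.ofReal_mul (by positivity)]
    rw [hint] at hmean
    rcases ENNReal.ofReal_le_ofReal_iff'.mp hmean with h | h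
    · exact h
    · exfalso
      have hpos : (0:ℝ) < (n:ℝ) * (1/p) := by
        apply mul_pos
        · exact_mod_cast hn
        · positivity
      linarith
  -- Chernoff setup
  set s₀ := u / (m:ℝ) with hs₀def
  have hs₀ : 0 < s₀ := div_pos hu0 hmpos
  set T := μ₀ + δ * n with hTdef
  set fib : Fin m → Finset (Fin n) := fun c => Finset.univ.filter (fun i => col i = c)
    with hfib
  set φ : ℕ → ℝ≥0∞ := fun k => ENNReal.ofReal (Real.exp (u * k)) with hφ
  have hφm : Measurable φ := measurable_from_top
  -- per-class integral
  have hclass : ∀ c : Fin m, ∫⁻ ω, ∏ i ∈ fib c, φ (X i ω) ∂μ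
      = ENNReal.ofReal (G ^ (fib c).card) := by
    intro c
    rw [lintegral_prod_indep μ X hX D hInd φ (fib c) ?indep]
    case indep =>
      intro i hi j hj hadj
      rw [hfib] at hi hj
      simp only [Finset.mem_filter, Finset.mem_univ, true_and] at hi hj
      exact hcol i j hadj (hi.trans hj.symm)
    rw [Finset.prod_congr rfl
      (fun i _ => geom_mgf_lintegral μ hp hp1 hu0.le hr (X i) (hX i) (hdist i))]
    rw [Finset.prod_const, ← ENNReal.ofReal_pow hGpos.le]
  -- the exponential moment function
  set Ysum : Ω → ℝ := fun ω => ∑ i, (X i ω : ℝ) with hYsum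
  have hYmeas : Measurable Ysum :=
    Finset.measurable_sum _ (fun i _ => measurable_from_top.comp (hX i))
  set f : Ω → ℝ≥0∞ := fun ω => ENNReal.ofReal (Real.exp (s₀ * Ysum ω)) with hfdef
  have hfmeas : Measurable f :=
    ENNReal.measurable_ofReal.comp (Real.measurable_exp.comp (hYmeas.const_mul s₀))
  have hsum_fib : ∀ ω, Ysum ω = ∑ c : Fin m, ∑ i ∈ fib c, (X i ω : ℝ) := by
    intro ω
    exact (Finset.sum_fiberwise_of_maps_to (fun i _ => Finset.mem_univ (col i)) _).symm
  have hfactor : ∀ ω, f ω = ∏ c : Fin m, (∏ i ∈ fib c, φ (X i ω)) ^ ((m:ℝ)⁻¹) := by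
    intro ω
    have h1 : ∀ c : Fin m, ∏ i ∈ fib c, φ (X i ω)
        = ENNReal.ofReal (Real.exp (u * ∑ i ∈ fib c, (X i ω : ℝ))) := by
      intro c
      rw [Finset.mul_sum, Real.exp_sum,
        ENNReal.ofReal_prod_of_nonneg (fun i _ => (Real.exp_pos _).le)]
    show ENNReal.ofReal (Real.exp (s₀ * Ysum ω)) = _
    calc ENNReal.ofReal (Real.exp (s₀ * Ysum ω))
        = ENNReal.ofReal (Real.exp
            (∑ c : Fin m, (u * ∑ i ∈ fib c, (X i ω:ℝ)) * (m:ℝ)⁻¹)) := by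
          congr 1
          congr 1
          rw [hsum_fib ω, Finset.mul_sum]
          refine Finset.sum_congr rfl (fun c _ => ?_)
          rw [hs₀def]
          ring
      _ = ∏ c : Fin m,
            (ENNReal.ofReal (Real.exp (u * ∑ i ∈ fib c, (X i ω:ℝ)))) ^ ((m:ℝ)⁻¹) := by
          rw [Real.exp_sum, ENNReal.ofReal_prod_of_nonneg (fun c _ => (Real.exp_pos _).le)]
          refine Finset.prod_congr rfl (fun c _ => ?_)
          rw [Real.exp_mul, ENNReal.ofReal_rpow_of_pos (Real.exp_pos _)]
      _ = ∏ c : Fin m, (∏ i ∈ fib c, φ (X i ω)) ^ ((m:ℝ)⁻¹) := by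
          refine Finset.prod_congr rfl (fun c _ => ?_)
          rw [h1 c]
  -- Hölder
  have hmeas_fc : ∀ c : Fin m, AEMeasurable (fun ω => ∏ i ∈ fib c, φ (X i ω)) μ :=
    fun c => (Finset.measurable_prod _ (fun i _ => hφm.comp (hX i))).aemeasurable
  have hholder : ∫⁻ ω, f ω ∂μ
      ≤ ∏ c : Fin m, (ENNReal.ofReal (G ^ (fib c).card)) ^ ((m:ℝ)⁻¹) := by
    calc ∫⁻ ω, f ω ∂μ
        = ∫⁻ ω, ∏ c : Fin m, (∏ i ∈ fib c, φ (X i ω)) ^ ((m:ℝ)⁻¹) ∂μ :=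
          lintegral_congr hfactor
      _ ≤ ∏ c : Fin m, (∫⁻ ω, ∏ i ∈ fib c, φ (X i ω) ∂μ) ^ ((m:ℝ)⁻¹) := by
          refine ENNReal.lintegral_prod_norm_pow_le _ (fun c _ => hmeas_fc c) ?_ ?_
          · rw [Finset.sum_const, Finset.card_univ, Fintype.card_fin, nsmul_eq_mul,
              mul_inv_cancel₀ (ne_of_gt hmpos)]
          · exact fun c _ => by positivity
      _ = ∏ c : Fin m, (ENNReal.ofReal (G ^ (fib c).card)) ^ ((m:ℝ)⁻¹) :=
          Finset.prod_congr rfl (fun c _ => by rw [hclass c])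
  -- compute the product
  have hcards : ∑ c : Fin m, ((fib c).card : ℝ) = (n:ℝ) := by
    have h2 : (Finset.univ : Finset (Fin n)).card = ∑ c : Fin m, (fib c).card :=
      Finset.card_eq_sum_card_fiberwise (fun i _ => Finset.mem_univ (col i))
    rw [Finset.card_univ, Fintype.card_fin] at h2
    rw [← Nat.cast_sum, ← h2]
  have hprodG : ∏ c : Fin m, (ENNReal.ofReal (G ^ (fib c).card)) ^ ((m:ℝ)⁻¹)
      = ENNReal.ofReal (Real.exp ((n:ℝ) * Real.log G / m)) := by
    have h1 : ∀ c : Fin m, (ENNReal.ofReal (G ^ (fib c).card)) ^ ((m:ℝ)⁻¹)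
        = ENNReal.ofReal (Real.exp ((((fib c).card : ℝ) * Real.log G) * (m:ℝ)⁻¹)) := by
      intro c
      rw [ENNReal.ofReal_rpow_of_pos (by positivity)]
      congr 1
      rw [← Real.log_pow, Real.rpow_def_of_pos (by positivity)]
    rw [Finset.prod_congr rfl (fun c _ => h1 c),
      ← ENNReal.ofReal_prod_of_nonneg (fun c _ => (Real.exp_pos _).le),
      ← Real.exp_sum]
    congr 1
    rw [← Finset.sum_mul, ← Finset.sum_mul, hcards, div_eq_mul_inv]
  -- Markov
  set ε := ENNReal.ofReal (Real.exp (s₀ * T)) with hε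
  have hε0 : ε ≠ 0 := (ENNReal.ofReal_pos.mpr (Real.exp_pos _)).ne'
  have hεtop : ε ≠ ⊤ := ENNReal.ofReal_ne_top
  have hmarkov : μ {ω | T ≤ Ysum ω} ≤ ε⁻¹ * ∫⁻ ω, f ω ∂μ := by
    have hsub : {ω | T ≤ Ysum ω} ⊆ {ω | ε ≤ f ω} := by
      intro ω hω
      show ε ≤ f ω
      rw [hε]
      exact ENNReal.ofReal_le_ofReal
        (Real.exp_le_exp.2 (mul_le_mul_of_nonneg_left hω hs₀.le))
    calc μ {ω | T ≤ Ysum ω} ≤ μ {ω | ε ≤ f ω} := measure_mono hsub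
      _ = ε⁻¹ * (ε * μ {ω | ε ≤ f ω}) := by
          rw [← mul_assoc, ENNReal.inv_mul_cancel hε0 hεtop, one_mul]
      _ ≤ ε⁻¹ * ∫⁻ ω, f ω ∂μ :=
          mul_le_mul_right (mul_meas_ge_le_lintegral₀ hfmeas.aemeasurable ε) _
  have hεinv : ε⁻¹ = ENNReal.ofReal (Real.exp (-(s₀ * T))) := by
    rw [hε, ← ENNReal.ofReal_inv_of_pos (Real.exp_pos _), ← Real.exp_neg]
  have hfinal : μ {ω | T ≤ Ysum ω}
      ≤ ENNReal.ofReal (Real.exp ((n:ℝ) * Real.log G / m - s₀ * T)) := by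
    calc μ {ω | T ≤ Ysum ω} ≤ ε⁻¹ * ∫⁻ ω, f ω ∂μ := hmarkov
      _ ≤ ε⁻¹ * ENNReal.ofReal (Real.exp ((n:ℝ) * Real.log G / m)) := by
          apply mul_le_mul_right
          rw [← hprodG]
          exact hholder
      _ = ENNReal.ofReal (Real.exp (-(s₀ * T)))
            * ENNReal.ofReal (Real.exp ((n:ℝ) * Real.log G / m)) := by rw [hεinv]
      _ = ENNReal.ofReal (Real.exp ((n:ℝ) * Real.log G / m - s₀ * T)) := by
          rw [← ENNReal.ofReal_mul (Real.exp_pos _).le, ← Real.exp_add]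
          congr 2
          ring
  -- exponent bound
  have hlogG : Real.log G ≤ 1/3 + (p/3 - p^2/8) * δ := by
    have h2 := (Real.log_le_log_iff hGpos (Real.exp_pos _)).mpr hG
    rwa [Real.log_exp] at h2
  have hexp_bound : (n:ℝ) * Real.log G / m - s₀ * T ≤ -(1/16 * p^2 * δ * n / d) := by
    have hTge : (n:ℝ)/p + δ * n ≤ T := by
      have heq : (n:ℝ)/p = (n:ℝ) * (1/p) := by ring
      rw [hTdef, heq]
      linarith
    have h2 : s₀ * ((n:ℝ)/p + δ * n) ≤ s₀ * T := mul_le_mul_of_nonneg_left hTge hs₀.le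
    have hA : (0:ℝ) ≤ (n:ℝ)/(m:ℝ) := by positivity
    have hkey : Real.log G - 1/3 - u * δ ≤ -(p^2 * δ / 8) := by
      rw [hu]
      nlinarith [hlogG]
    have hiden : (n:ℝ) * Real.log G / m - s₀ * ((n:ℝ)/p + δ * n)
        = ((n:ℝ)/m) * (Real.log G - 1/3 - u * δ) := by
      rw [hs₀def, hu]
      field_simp
      ring
    have h3 : ((n:ℝ)/m) * (Real.log G - 1/3 - u*δ) ≤ ((n:ℝ)/m) * (-(p^2 * δ/8)) :=
      mul_le_mul_of_nonneg_left hkey hA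
    have hnum : 0 ≤ p^2 * δ * (n:ℝ) := by
      apply mul_nonneg (mul_nonneg (by positivity) hδ0) (by positivity)
    have h4' : 1/16 * p^2 * δ * (n:ℝ) / d ≤ (n:ℝ)/m * (p^2 * δ/8) := by
      have e1 : 1/16 * p^2 * δ * (n:ℝ)/d = (p^2*δ*(n:ℝ))/(16*d) := by ring
      have e2 : (n:ℝ)/m * (p^2*δ/8) = (p^2*δ*(n:ℝ))/(8*(m:ℝ)) := by ring
      rw [e1, e2, div_le_div_iff₀ (by positivity) (by positivity)]
      nlinarith [hnum, hm2d]
    have h5 : ((n:ℝ)/m) * (-(p^2*δ/8)) = -((n:ℝ)/m * (p^2*δ/8)) := by ring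
    linarith [h2, h3, h4']
  -- conclusion
  calc μ {ω | μ₀ + δ * n ≤ ∑ i, (X i ω:ℝ)}
      ≤ ENNReal.ofReal (Real.exp ((n:ℝ) * Real.log G / m - s₀ * T)) := hfinal
    _ ≤ ENNReal.ofReal (1 * d * Real.exp (-(1/16 * p^2 * δ * n / d))) := by
        apply ENNReal.ofReal_le_ofReal
        calc Real.exp ((n:ℝ) * Real.log G / m - s₀ * T)
            ≤ Real.exp (-(1/16 * p^2 * δ * n / d)) := Real.exp_le_exp.2 hexp_bound
          _ ≤ 1 * d * Real.exp (-(1/16 * p^2 * δ * n / d)) := by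
              nlinarith [Real.exp_pos (-(1/16 * p^2 * δ * (n:ℝ) / d))]
end

section
/- Let G = (V,E) be a finite simple graph and let x be a nonnegative real number. If there exists a subset S ⊆ V such that the number of edges of G with exactly one endpoint in S is at least |E| − x, then G contains an independent set of size at least (|V| − x)/2. -/
open scoped Classical
open Finset

private lemma indep_aux {V : Type} [Fintype V] (G : SimpleGraph V) :
    ∀ n (T : Finset V),
      (univ.filter fun p : V × V => G.Adj p.1 p.2 ∧ p.1 ∈ T ∧ p.2 ∈ T).card = n →
      ∃ I : Finset V, I ⊆ T ∧ (∀ u ∈ I, ∀ v ∈ I, ¬G.Adj u v) ∧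
        2 * T.card ≤ 2 * I.card + n := by
  intro n
  induction n using Nat.strong_induction_on with
  | _ n ih =>
    intro T hT
    by_cases hind : ∀ u ∈ T, ∀ v ∈ T, ¬G.Adj u v
    · exact ⟨T, Finset.Subset.refl T, hind, Nat.le_add_right _ _⟩
    · push_neg at hind
      obtain ⟨u, hu, v, hv, huv⟩ := hind
      have hne : u ≠ v := G.ne_of_adj huv
      set T' := T.erase u with hT'
      set A := univ.filter fun p : V × V => G.Adj p.1 p.2 ∧ p.1 ∈ T ∧ p.2 ∈ T with hA
      set A' := univ.filter fun p : V × V => G.Adj p.1 p.2 ∧ p.1 ∈ T' ∧ p.2 ∈ T' with hA'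
      have hpair : ({(u, v), (v, u)} : Finset (V × V)) ⊆ A := by
        intro p hp
        simp only [Finset.mem_insert, Finset.mem_singleton] at hp
        rw [hA]
        rcases hp with rfl | rfl
        · exact Finset.mem_filter.mpr ⟨Finset.mem_univ _, huv, hu, hv⟩
        · exact Finset.mem_filter.mpr ⟨Finset.mem_univ _, huv.symm, hv, hu⟩
      have hpaircard : ({(u, v), (v, u)} : Finset (V × V)).card = 2 := by
        rw [Finset.card_insert_of_notMem (by simp [hne]), Finset.card_singleton]
      have hsub : A' ⊆ A \ {(u, v), (v, u)} := by
        intro p hp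
        simp only [hA', Finset.mem_filter, Finset.mem_univ, true_and] at hp
        obtain ⟨hadj, h1, h2⟩ := hp
        have h1' := Finset.mem_of_mem_erase h1
        have h2' := Finset.mem_of_mem_erase h2
        have hu1 : p.1 ≠ u := Finset.ne_of_mem_erase h1
        have hu2 : p.2 ≠ u := Finset.ne_of_mem_erase h2
        simp only [hA, Finset.mem_sdiff, Finset.mem_filter, Finset.mem_univ, true_and,
          Finset.mem_insert, Finset.mem_singleton]
        refine ⟨⟨hadj, h1', h2'⟩, ?_⟩
        rintro (h | h)
        · exact hu1 (by rw [h])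
        · exact hu2 (by rw [h])
      have hcard' : A'.card + 2 ≤ A.card := by
        have h2A : 2 ≤ A.card := hpaircard ▸ Finset.card_le_card hpair
        have := Finset.card_le_card hsub
        rw [Finset.card_sdiff_of_subset hpair, hpaircard] at this
        omega
      have hn' : A'.card < n := by omega
      obtain ⟨I, hIsub, hIind, hIcard⟩ := ih A'.card hn' T' rfl
      refine ⟨I, fun a ha => Finset.mem_of_mem_erase (hIsub ha), hIind, ?_⟩
      have hTcard : T.card = T'.card + 1 := by
        rw [hT', Finset.card_erase_of_mem hu]
        have : 0 < T.card := Finset.card_pos.mpr ⟨u, hu⟩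
        omega
      have hAn : A.card = n := hT
      omega

/-- If a finite simple graph `G = (V, E)` has a cut (determined by a
vertex subset `S`, counted as the set of edges with exactly one endpoint in `S`,
equivalently the ordered adjacent pairs `(u, v)` with `u ∈ S`, `v ∉ S`) of size at
least `|E| - x` for some `x ≥ 0`, then `G` has an independent set of size at least
`(|V| - x) / 2`. -/
theorem stmt_5 {V : Type} [Fintype V] (G : SimpleGraph V) (x : ℝ) (hx : 0 ≤ x)
    (h : ∃ S : Finset V,
      (Nat.card G.edgeSet : ℝ) - x ≤
        (Finset.univ.filter fun p : V × V =>
          G.Adj p.1 p.2 ∧ p.1 ∈ S ∧ p.2 ∉ S).card) :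
    ∃ I : Finset V, (∀ u ∈ I, ∀ v ∈ I, ¬G.Adj u v) ∧
      ((Fintype.card V : ℝ) - x) / 2 ≤ I.card := by
  obtain ⟨S, hS⟩ := h
  set Sc := Sᶜ with hSc
  set A := univ.filter fun p : V × V => G.Adj p.1 p.2 with hA
  set C := univ.filter fun p : V × V => G.Adj p.1 p.2 ∧ p.1 ∈ S ∧ p.2 ∉ S with hC
  set C' := univ.filter fun p : V × V => G.Adj p.1 p.2 ∧ p.1 ∉ S ∧ p.2 ∈ S with hC'
  set B1 := univ.filter fun p : V × V => G.Adj p.1 p.2 ∧ p.1 ∈ S ∧ p.2 ∈ S with hB1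
  set B2 := univ.filter fun p : V × V => G.Adj p.1 p.2 ∧ p.1 ∈ Sc ∧ p.2 ∈ Sc with hB2
  -- C' has the same card as C via swap
  have hCC' : C.card = C'.card := by
    apply Finset.card_nbij (fun p => p.swap)
    · intro p hp
      simp only [hC, Finset.mem_coe, Finset.mem_filter, Finset.mem_univ, true_and] at hp
      simp only [hC', Finset.mem_coe, Finset.mem_filter, Finset.mem_univ, true_and]
      exact ⟨hp.1.symm, hp.2.2, hp.2.1⟩
    · intro p hp q hq hpq
      exact Prod.swap_injective hpq
    · intro p hp
      simp only [hC', Finset.mem_coe, Finset.mem_filter, Finset.mem_univ, true_and] at hp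
      refine ⟨p.swap, ?_, Prod.swap_swap p⟩
      simp only [hC, Finset.mem_coe, Finset.mem_filter, Finset.mem_univ, true_and]
      exact ⟨hp.1.symm, hp.2.2, hp.2.1⟩
  -- partition A
  have hsplit : A.card = B1.card + B2.card + C.card + C'.card := by
    have h1 : A.card = (A.filter fun p => p.1 ∈ S).card + (A.filter fun p => p.1 ∉ S).card :=
      (Finset.card_filter_add_card_filter_not _).symm
    have h2 : (A.filter fun p => p.1 ∈ S).card =
        ((A.filter fun p => p.1 ∈ S).filter fun p => p.2 ∈ S).card +
        ((A.filter fun p => p.1 ∈ S).filter fun p => p.2 ∉ S).card :=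
      (Finset.card_filter_add_card_filter_not _).symm
    have h3 : (A.filter fun p => p.1 ∉ S).card =
        ((A.filter fun p => p.1 ∉ S).filter fun p => p.2 ∈ S).card +
        ((A.filter fun p => p.1 ∉ S).filter fun p => p.2 ∉ S).card :=
      (Finset.card_filter_add_card_filter_not _).symm
    have e1 : (A.filter fun p => p.1 ∈ S).filter (fun p => p.2 ∈ S) = B1 := by
      simp only [hA, hB1, Finset.filter_filter]
      congr 1; ext p; tauto
    have e2 : (A.filter fun p => p.1 ∈ S).filter (fun p => p.2 ∉ S) = C := by
      simp only [hA, hC, Finset.filter_filter]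
      congr 1; ext p; tauto
    have e3 : (A.filter fun p => p.1 ∉ S).filter (fun p => p.2 ∈ S) = C' := by
      simp only [hA, hC', Finset.filter_filter]
      congr 1; ext p; tauto
    have e4 : (A.filter fun p => p.1 ∉ S).filter (fun p => p.2 ∉ S) = B2 := by
      simp only [hA, hB2, hSc, Finset.filter_filter]
      congr 1; ext p; simp [Finset.mem_compl]; tauto
    rw [h1, h2, h3, e1, e2, e3, e4]; ring
  -- A.card = 2 * #edges
  have hAcard : A.card = 2 * G.edgeFinset.card := by
    rw [SimpleGraph.two_mul_card_edgeFinset]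
  have hNat : (Nat.card G.edgeSet : ℝ) = (G.edgeFinset.card : ℝ) := by
    norm_cast
    rw [Nat.card_eq_fintype_card, SimpleGraph.edgeFinset, Set.toFinset_card]
  -- internal pairs bound
  have hB : (B1.card : ℝ) + B2.card ≤ 2 * x := by
    have h2E : (B1.card : ℝ) + B2.card + 2 * C.card = 2 * G.edgeFinset.card := by
      have heq : 2 * G.edgeFinset.card = B1.card + B2.card + C.card + C.card := by
        rw [← hAcard, hsplit, hCC']
      have := congrArg (fun m : ℕ => (m : ℝ)) heq
      push_cast at this
      linarith
    rw [hNat] at hS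
    have hEC : (G.edgeFinset.card : ℝ) - x ≤ C.card := hS
    linarith
  obtain ⟨I1, hI1s, hI1i, hI1c⟩ := indep_aux G B1.card S rfl
  obtain ⟨I2, hI2s, hI2i, hI2c⟩ := indep_aux G B2.card Sc rfl
  have hVcard : S.card + Sc.card = Fintype.card V := by
    rw [hSc, Finset.card_compl]
    have := Finset.card_le_univ S
    omega
  have key : ((Fintype.card V : ℝ) - x) ≤ I1.card + I2.card := by
    have c1 : (2 * S.card : ℝ) ≤ 2 * I1.card + B1.card := by exact_mod_cast hI1c
    have c2 : (2 * Sc.card : ℝ) ≤ 2 * I2.card + B2.card := by exact_mod_cast hI2c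
    have cV : (S.card : ℝ) + Sc.card = Fintype.card V := by exact_mod_cast hVcard
    linarith
  by_cases hle : I1.card ≤ I2.card
  · refine ⟨I2, hI2i, ?_⟩
    have : (I1.card : ℝ) ≤ I2.card := by exact_mod_cast hle
    linarith
  · refine ⟨I1, hI1i, ?_⟩
    have : (I2.card : ℝ) ≤ I1.card := by exact_mod_cast (le_of_not_ge hle)
    linarith
end

section
/- Let G = (V,E) be a finite simple graph with no isolated vertices. Let G* be the graph whose vertex set is the disjoint union V ⊔ E, where two vertices of V are adjacent in G* if and only if they are adjacent in G, each e ∈ E is adjacent exactly to its two endpoints in V, and no two elements of E are adjacent. Then the minimum size of a dominating set of G* equals the minimum size of a vertex cover of G. -/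
/-!
Collapsing every edge-vertex of a dominating set of `G*` onto one of its endpoints gives a vertex
cover of `G` that is no larger: an edge-vertex `e` is dominated only by itself or by an endpoint
of `e`. Conversely a vertex cover `S`, viewed inside `G*`, dominates every edge-vertex, and it
dominates every vertex outside `S` through any of its neighbours, which exist and lie in `S`.
-/

/-- The graph `G*` on vertex set `V ⊔ E`: two original vertices are adjacent iff they are
adjacent in `G`, an edge-vertex `e` is adjacent exactly to the two endpoints of `e`,
and no two edge-vertices are adjacent. -/
def Gstar {V : Type} (G : SimpleGraph V) : SimpleGraph (V ⊕ G.edgeSet) where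
  Adj a b :=
    match a, b with
    | Sum.inl u, Sum.inl v => G.Adj u v
    | Sum.inl u, Sum.inr e => u ∈ (e : Sym2 V)
    | Sum.inr e, Sum.inl u => u ∈ (e : Sym2 V)
    | Sum.inr _, Sum.inr _ => False
  symm := by
    constructor
    rintro (u | e) (v | f) h
    · exact h.symm
    · exact h
    · exact h
    · exact h.elim
  loopless := by
    constructor
    rintro (u | e) h
    · exact h.ne rfl
    · exact h

namespace Nat

theorem sInf_le_sInf_of_forall_exists_le {A B : Set ℕ} (hB : B.Nonempty)
    (h : ∀ b ∈ B, ∃ a ∈ A, a ≤ b) : sInf A ≤ sInf B := by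
  obtain ⟨a, ha, hle⟩ := h _ (Nat.sInf_mem hB)
  exact (Nat.sInf_le ha).trans hle

theorem sInf_eq_sInf_of_forall_exists_le {A B : Set ℕ} (hAB : ∀ a ∈ A, ∃ b ∈ B, b ≤ a)
    (hBA : ∀ b ∈ B, ∃ a ∈ A, a ≤ b) : sInf A = sInf B := by
  rcases B.eq_empty_or_nonempty with rfl | hB
  · have hA : A = ∅ := Set.eq_empty_of_forall_notMem fun a ha ↦ by
      obtain ⟨b, hb, -⟩ := hAB a ha
      exact hb
    simp [hA]
  · obtain ⟨a, ha, -⟩ := hBA _ hB.some_mem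
    exact le_antisymm (sInf_le_sInf_of_forall_exists_le hB hBA)
      (sInf_le_sInf_of_forall_exists_le ⟨a, ha⟩ hAB)

end Nat

namespace SimpleGraph

def IsDominating {W : Type*} (H : SimpleGraph W) (D : Set W) : Prop :=
  ∀ a, a ∈ D ∨ ∃ b ∈ D, H.Adj b a

theorem IsVertexCover.exists_mem_of_mem_edgeSet {V : Type*} {G : SimpleGraph V} {S : Set V}
    (hS : G.IsVertexCover S) {e : Sym2 V} (he : e ∈ G.edgeSet) : ∃ x ∈ S, x ∈ e := by
  induction e using Sym2.ind with
  | _ x y =>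
    rcases hS he with hx | hy
    · exact ⟨x, hx, Sym2.mem_mk_left x y⟩
    · exact ⟨y, hy, Sym2.mem_mk_right x y⟩

end SimpleGraph

namespace Gstar

variable {V : Type} {G : SimpleGraph V}

noncomputable def toVertex : V ⊕ G.edgeSet → V
  | .inl v => v
  | .inr e => (e : Sym2 V).out.1

theorem exists_toVertex_mem_of_isDominating {D : Set (V ⊕ G.edgeSet)}
    (hD : (Gstar G).IsDominating D) (e : G.edgeSet) : ∃ a ∈ D, toVertex a ∈ (e : Sym2 V) := by
  rcases hD (.inr e) with he | ⟨b, hb, hadj⟩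
  · exact ⟨.inr e, he, Sym2.out_fst_mem _⟩
  · rcases b with w | f
    · exact ⟨.inl w, hb, hadj⟩
    · exact hadj.elim

theorem isVertexCover_image_toVertex {D : Set (V ⊕ G.edgeSet)}
    (hD : (Gstar G).IsDominating D) : G.IsVertexCover (toVertex '' D) := by
  intro u v huv
  obtain ⟨a, ha, hmem⟩ := exists_toVertex_mem_of_isDominating hD ⟨s(u, v), huv⟩
  rcases Sym2.mem_iff.mp hmem with hu | hv
  · exact .inl ⟨a, ha, hu⟩
  · exact .inr ⟨a, ha, hv⟩

theorem isDominating_image_inl (hiso : ∀ v, ∃ u, G.Adj u v) {S : Set V}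
    (hS : G.IsVertexCover S) : (Gstar G).IsDominating (Sum.inl '' S) := by
  rintro (v | ⟨e, he⟩)
  · by_cases hv : v ∈ S
    · exact .inl ⟨v, hv, rfl⟩
    · obtain ⟨u, hu⟩ := hiso v
      exact .inr ⟨.inl u, ⟨u, (hS hu).resolve_right hv, rfl⟩, hu⟩
  · obtain ⟨x, hx, hxe⟩ := hS.exists_mem_of_mem_edgeSet he
    exact .inr ⟨.inl x, ⟨x, hx, rfl⟩, hxe⟩

end Gstar

theorem stmt_6_general {V : Type} (G : SimpleGraph V)
    (hiso : ∀ v : V, ∃ u, G.Adj u v) :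
    sInf {k : ℕ | ∃ D : Finset (V ⊕ G.edgeSet),
        (∀ a, a ∈ D ∨ ∃ b ∈ D, (Gstar G).Adj b a) ∧ D.card = k} =
    sInf {k : ℕ | ∃ S : Finset V,
        (∀ u v, G.Adj u v → u ∈ S ∨ v ∈ S) ∧ S.card = k} := by
  classical
  apply Nat.sInf_eq_sInf_of_forall_exists_le
  · rintro _ ⟨D, hD, rfl⟩
    have hS : G.IsVertexCover (D.image Gstar.toVertex : Set V) := by
      simpa using Gstar.isVertexCover_image_toVertex (D := (D : Set (V ⊕ G.edgeSet))) hD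
    exact ⟨_, ⟨_, fun u v huv ↦ hS huv, rfl⟩, Finset.card_image_le⟩
  · rintro _ ⟨S, hS, rfl⟩
    have hD : (Gstar G).IsDominating ↑(S.map (.inl : V ↪ V ⊕ G.edgeSet)) := by
      simpa using Gstar.isDominating_image_inl hiso (S := (S : Set V)) fun u v huv ↦ hS u v huv
    exact ⟨_, ⟨_, hD, rfl⟩, (Finset.card_map _).le⟩

/-- For a finite simple graph `G` with no isolated vertices, the minimum
size of a dominating set of `G*` equals the minimum size of a vertex cover of `G`. -/
theorem stmt_6 {V : Type} [Fintype V] (G : SimpleGraph V)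
    (hiso : ∀ v : V, ∃ u, G.Adj u v) :
    sInf {k : ℕ | ∃ D : Finset (V ⊕ G.edgeSet),
        (∀ a, a ∈ D ∨ ∃ b ∈ D, (Gstar G).Adj b a) ∧ D.card = k} =
    sInf {k : ℕ | ∃ S : Finset V,
        (∀ u v, G.Adj u v → u ∈ S ∨ v ∈ S) ∧ S.card = k} :=
  stmt_6_general G hiso
end

section
/- Let G = (V,E) be a finite simple graph, let x ≥ 0 be an integer, and let I° be an independent set of the subdivided graph G^x. Then G contains an independent set I with |I| ≥ |I°| − x·|E|. -/
open scoped Classical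

/-- The vertex set of the `(2x+1)`-subdivision `G^x` of `G`: the original vertices
together with, for each edge of `G` (recorded as the ordered pair `(u, v)` with
`u < v` and `G.Adj u v`), the `2x` internal path vertices. -/
abbrev SubVert {V : Type} [LinearOrder V] (G : SimpleGraph V) (x : ℕ) : Type :=
  V ⊕ {p : V × V × Fin (2 * x) // p.1 < p.2.1 ∧ G.Adj p.1 p.2.1}

/-- The `(2x+1)`-subdivision `G^x` of `G`: each edge `{u, v}` of `G` is replaced by the
path `(u, w_{e,1}, …, w_{e,2x}, v)` of length `2x+1` through `2x` new internal vertices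
(in particular `G^0 = G`). -/
def Subdiv {V : Type} [LinearOrder V] (G : SimpleGraph V) (x : ℕ) :
    SimpleGraph (SubVert G x) where
  Adj a b :=
    match a, b with
    | Sum.inl u, Sum.inl v => x = 0 ∧ G.Adj u v
    | Sum.inl a, Sum.inr p =>
        (a = p.1.1 ∧ (p.1.2.2 : ℕ) = 0) ∨ (a = p.1.2.1 ∧ (p.1.2.2 : ℕ) = 2 * x - 1)
    | Sum.inr p, Sum.inl a =>
        (a = p.1.1 ∧ (p.1.2.2 : ℕ) = 0) ∨ (a = p.1.2.1 ∧ (p.1.2.2 : ℕ) = 2 * x - 1)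
    | Sum.inr p, Sum.inr q =>
        p.1.1 = q.1.1 ∧ p.1.2.1 = q.1.2.1 ∧
          ((p.1.2.2 : ℕ) + 1 = (q.1.2.2 : ℕ) ∨ (q.1.2.2 : ℕ) + 1 = (p.1.2.2 : ℕ))
  symm := by
    constructor
    rintro (u | p) (v | q) h
    · exact ⟨h.1, h.2.symm⟩
    · exact h
    · exact h
    · exact ⟨h.1.symm, h.2.1.symm, h.2.2.symm⟩
  loopless := by
    constructor
    rintro (u | p) h
    · exact G.irrefl h.2
    · obtain ⟨-, -, h | h⟩ := h <;> omega

/-!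
Let `S = I° ∩ V`. Deleting one endpoint of every edge of `G` with both ends in `S` leaves an
independent set of `G`, so it suffices to show that `|I° \ S|` plus the number of such edges is at
most `x·|E|`. This is done edge by edge: the indices of the internal vertices of a subdivided edge
that lie in `I°` contain no two consecutive numbers, so there are at most `x` of them among the
`2x` indices, and at most `x - 1` when both ends of the edge are in `S`, since then the indices
`0` and `2x - 1` are excluded as well.
-/

open Finset

theorem Finset.card_le_of_subset_Ico_of_succ_notMem {S : Finset ℕ} {a b : ℕ}
    (hS : S ⊆ Ico a b) (hsucc : ∀ i ∈ S, i + 1 ∉ S) : #S ≤ (b - a + 1) / 2 := by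
  have hmaps : Set.MapsTo (fun i => (i - a) / 2) S (range ((b - a + 1) / 2)) := by
    intro i hi
    have := mem_Ico.1 (hS hi)
    simp only [coe_range, Set.mem_Iio]
    omega
  have hinj : Set.InjOn (fun i => (i - a) / 2) S := by
    intro i hi j hj hij
    have := mem_Ico.1 (hS hi)
    have := mem_Ico.1 (hS hj)
    by_contra hne
    simp only at hij
    obtain rfl | rfl : j = i + 1 ∨ i = j + 1 := by omega
    · exact hsucc i hi hj
    · exact hsucc j hj hi
  simpa using card_le_card_of_injOn _ hmaps hinj

namespace SimpleGraph

variable {V : Type} [Fintype V] [LinearOrder V] (G : SimpleGraph V)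

noncomputable def orientedEdges : Finset (V × V) :=
  univ.filter fun e => e.1 < e.2 ∧ G.Adj e.1 e.2

theorem card_orientedEdges_le : #G.orientedEdges ≤ Nat.card G.edgeSet := by
  have hinj : Set.InjOn (fun e : V × V => s(e.1, e.2)) G.orientedEdges := by
    rintro ⟨u, v⟩ huv ⟨u', v'⟩ huv' h
    simp only [orientedEdges, mem_coe, mem_filter, mem_univ, true_and] at huv huv'
    rcases Sym2.eq_iff.1 h with ⟨rfl, rfl⟩ | ⟨rfl, rfl⟩
    · rfl
    · exact absurd (huv.1.trans huv'.1) (lt_irrefl _)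
  have hmaps : Set.MapsTo (fun e : V × V => s(e.1, e.2)) G.orientedEdges G.edgeFinset := by
    intro e he
    simp only [orientedEdges, mem_coe, mem_filter, mem_univ, true_and] at he
    simpa using he.2
  rw [← coe_edgeFinset, Nat.card_coe_set_eq, Set.ncard_coe_finset]
  exact card_le_card_of_injOn _ hmaps hinj

/-- Keep the vertices of `S` that have no smaller neighbour in `S`; each discarded vertex is the
larger end of an edge inside `S`. -/
theorem exists_indep_card_le_card_add (S : Finset V) :
    ∃ I : Finset V, (∀ u ∈ I, ∀ v ∈ I, ¬G.Adj u v) ∧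
      #S ≤ #I + #(G.orientedEdges.filter fun e => e.1 ∈ S ∧ e.2 ∈ S) := by
  set I := S.filter fun v => ∀ u ∈ S, G.Adj u v → v < u
  refine ⟨I, ?_, ?_⟩
  · intro u hu v hv huv
    simp only [I, mem_filter] at hu hv
    exact lt_asymm (hu.2 v hv.1 huv.symm) (hv.2 u hu.1 huv)
  · have hrest : S.filter (fun v => ¬∀ u ∈ S, G.Adj u v → v < u) ⊆
        (G.orientedEdges.filter fun e => e.1 ∈ S ∧ e.2 ∈ S).image Prod.snd := by
      intro v hv
      simp only [mem_filter, not_forall, not_lt] at hv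
      obtain ⟨hvS, u, huS, huv, hvu⟩ := hv
      refine mem_image.2 ⟨(u, v), ?_, rfl⟩
      simp only [orientedEdges, mem_filter, mem_univ, true_and]
      exact ⟨⟨lt_of_le_of_ne hvu (G.ne_of_adj huv), huv⟩, huS, hvS⟩
    calc #S = #I + #(S.filter fun v => ¬∀ u ∈ S, G.Adj u v → v < u) :=
          (card_filter_add_card_filter_not _).symm
      _ ≤ _ := Nat.add_le_add_left ((card_le_card hrest).trans card_image_le) _

end SimpleGraph

namespace Subdiv

variable {V : Type} [LinearOrder V] {G : SimpleGraph V} {x : ℕ}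

/-- The indices `i` (counted from `u`) of the internal vertices `w_{e,i+1}` in `I0` on the
subdivided edge `e = (u, v)`. -/
def pathIndices (I0 : Finset (SubVert G x)) (e : V × V) : Finset ℕ :=
  (I0.toRight.filter fun q => (q.1.1, q.1.2.1) = e).image fun q => (q.1.2.2 : ℕ)

theorem card_filter_toRight_eq_card_pathIndices (I0 : Finset (SubVert G x)) (e : V × V) :
    #(I0.toRight.filter fun q => (q.1.1, q.1.2.1) = e) = #(pathIndices I0 e) := by
  refine (card_image_of_injOn ?_).symm
  intro q hq q' hq' h
  simp only [mem_coe, mem_filter, Prod.ext_iff] at hq hq'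
  exact Subtype.ext (Prod.ext (hq.2.1.trans hq'.2.1.symm)
    (Prod.ext (hq.2.2.trans hq'.2.2.symm) (Fin.ext h)))

theorem mem_pathIndices {I0 : Finset (SubVert G x)} {e : V × V} {i : ℕ} :
    i ∈ pathIndices I0 e ↔
      ∃ q, Sum.inr q ∈ I0 ∧ q.1.1 = e.1 ∧ q.1.2.1 = e.2 ∧ (q.1.2.2 : ℕ) = i := by
  simp [pathIndices, Prod.ext_iff, and_assoc]

variable {I0 : Finset (SubVert G x)} (hI0 : ∀ u ∈ I0, ∀ v ∈ I0, ¬(Subdiv G x).Adj u v)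
include hI0

theorem succ_notMem_pathIndices (e : V × V) :
    ∀ i ∈ pathIndices I0 e, i + 1 ∉ pathIndices I0 e := by
  intro i hi hi'
  obtain ⟨q, hq, hq1, hq2, rfl⟩ := mem_pathIndices.1 hi
  obtain ⟨q', hq', hq'1, hq'2, hq'i⟩ := mem_pathIndices.1 hi'
  exact hI0 _ hq _ hq' ⟨hq1.trans hq'1.symm, hq2.trans hq'2.symm, Or.inl hq'i.symm⟩

theorem pathIndices_subset_Ico (e : V × V) (hu : Sum.inl e.1 ∈ I0) (hv : Sum.inl e.2 ∈ I0) :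
    pathIndices I0 e ⊆ Ico 1 (2 * x - 1) := by
  intro i hi
  obtain ⟨q, hq, hq1, hq2, rfl⟩ := mem_pathIndices.1 hi
  have hfirst := hI0 _ hu _ hq
  have hlast := hI0 _ hv _ hq
  simp only [Subdiv, hq1, hq2, true_and, not_or] at hfirst hlast
  have := q.1.2.2.isLt
  simp only [mem_Ico]
  omega

theorem card_pathIndices_add_le [Fintype V] {e : V × V} (he : e ∈ G.orientedEdges) :
    #(pathIndices I0 e) + (if e.1 ∈ I0.toLeft ∧ e.2 ∈ I0.toLeft then 1 else 0) ≤ x := by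
  have hconsec := succ_notMem_pathIndices hI0 e
  split_ifs with hends
  · simp only [mem_toLeft] at hends
    have hx : x ≠ 0 := fun hx => hI0 _ hends.1 _ hends.2 ⟨hx, (mem_filter.1 he).2.2⟩
    have := card_le_of_subset_Ico_of_succ_notMem
      (pathIndices_subset_Ico hI0 e hends.1 hends.2) hconsec
    omega
  · have hsub : pathIndices I0 e ⊆ Ico 0 (2 * x) := by
      intro i hi
      obtain ⟨q, -, -, -, rfl⟩ := mem_pathIndices.1 hi
      simp [q.1.2.2.isLt]
    have := card_le_of_subset_Ico_of_succ_notMem hsub hconsec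
    omega

theorem card_toRight_add_card_le [Fintype V] :
    #I0.toRight + #(G.orientedEdges.filter fun e => e.1 ∈ I0.toLeft ∧ e.2 ∈ I0.toLeft) ≤
      x * #G.orientedEdges := by
  have hmaps : ∀ q ∈ I0.toRight, (q.1.1, q.1.2.1) ∈ G.orientedEdges := fun q _ => by
    simpa [SimpleGraph.orientedEdges] using q.2
  calc _ = ∑ e ∈ G.orientedEdges, (#(pathIndices I0 e) +
          if e.1 ∈ I0.toLeft ∧ e.2 ∈ I0.toLeft then 1 else 0) := by
        rw [sum_add_distrib, card_eq_sum_card_fiberwise hmaps, card_filter]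
        simp only [card_filter_toRight_eq_card_pathIndices]
    _ ≤ ∑ _e ∈ G.orientedEdges, x := sum_le_sum fun e he => card_pathIndices_add_le hI0 he
    _ = x * #G.orientedEdges := by rw [sum_const, smul_eq_mul, mul_comm]

end Subdiv

/-- For a finite simple graph `G = (V, E)`, an integer `x ≥ 0`, and any
independent set `I°` of the subdivided graph `G^x`, the graph `G` has an independent
set `I` with `|I| ≥ |I°| - x·|E|`. -/
theorem stmt_7 {V : Type} [Fintype V] [LinearOrder V] (G : SimpleGraph V) (x : ℕ)
    (I0 : Finset (SubVert G x))
    (hI0 : ∀ u ∈ I0, ∀ v ∈ I0, ¬(Subdiv G x).Adj u v) :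
    ∃ I : Finset V, (∀ u ∈ I, ∀ v ∈ I, ¬G.Adj u v) ∧
      (I0.card : ℤ) - x * Nat.card G.edgeSet ≤ I.card := by
  obtain ⟨I, hI, hIcard⟩ := G.exists_indep_card_le_card_add I0.toLeft
  refine ⟨I, hI, ?_⟩
  have hpaths := Subdiv.card_toRight_add_card_le hI0
  have hedges := Nat.mul_le_mul_left x G.card_orientedEdges_le
  have hsplit := card_toLeft_add_card_toRight (u := I0)
  push_cast [← hsplit]
  omega
end

section
/- Let λ > 0, let T_1, …, T_n be independent exponentially distributed random variables with rate λ, and let c_1, …, c_n be real constants. Let M := max_{1 ≤ i ≤ n} (T_i − c_i) and let N := #{i : T_i − c_i ≥ M − 1}. Then for every integer t ≥ 1, P[N ≥ t] ≤ (1 − e^{−λ})^{t−1}. -/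
/-!
Put `X i = T i - c i`. If `N ≥ t`, let `X j` be the `t`-th largest value and `S` the indices of
the `t - 1` values above it; then `X j ≤ X i ≤ X j + 1` for `i ∈ S` and `X i ≤ X j` for the
other `i ≠ j`. Conditionally on `X j = x` the other `X i` are independent, and by memorylessness
`P[x ≤ X i ≤ x + 1] ≤ (1 - e^{-λ}) P[x < X i]`. Hence this configuration has probability at most
`(1 - e^{-λ})^(t-1)` times that of `X j` being strictly the `t`-th largest value with `S`
indexing the larger ones, and for fixed `t` the latter events are disjoint as `(j, S)` varies.
The laws have no atoms, so ties cost nothing.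
-/

open MeasureTheory ProbabilityTheory Set Finset
open scoped Classical ENNReal

def HasExpTail (ν : Measure ℝ) (lam : ℝ) : Prop :=
  ∀ s, 0 ≤ s → ν (Ioi s) = ENNReal.ofReal (Real.exp (-(lam * s)))

namespace HasExpTail

variable {ν : Measure ℝ} [IsProbabilityMeasure ν] {lam : ℝ}

theorem measure_Ioi_eq (hν : HasExpTail ν lam) (a : ℝ) :
    ν (Ioi a) = ENNReal.ofReal (Real.exp (-(lam * max a 0))) := by
  rcases le_total 0 a with ha | ha
  · rw [max_eq_left ha, hν a ha]
  · have h0 : ν (Ioi 0) = 1 := by simpa using hν 0 le_rfl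
    rw [max_eq_right ha, mul_zero, neg_zero, Real.exp_zero, ENNReal.ofReal_one]
    exact le_antisymm prob_le_one (h0 ▸ measure_mono (Ioi_subset_Ioi ha))

theorem nullSingletonClass (hν : HasExpTail ν lam) : NullSingletonClass ν := by
  have hcdf : (cdf ν : ℝ → ℝ) = fun x => 1 - Real.exp (-(lam * max x 0)) := by
    funext x
    rw [cdf_eq_real, ← compl_Ioi, measureReal_compl measurableSet_Ioi, probReal_univ,
      measureReal_def, hν.measure_Ioi_eq, ENNReal.toReal_ofReal (Real.exp_nonneg _)]
  have hcont : Continuous (cdf ν) := hcdf ▸ by fun_prop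
  refine ⟨fun a => ?_⟩
  rw [← measure_cdf ν, StieltjesFunction.measure_singleton,
    hcont.continuousAt.continuousWithinAt.leftLim_eq, sub_self, ENNReal.ofReal_zero]

theorem measure_Icc_le (hν : HasExpTail ν lam) (hlam : 0 ≤ lam) (a : ℝ) :
    ν (Icc a (a + 1)) ≤ ENNReal.ofReal (1 - Real.exp (-lam)) * ν (Ioi a) := by
  have := hν.nullSingletonClass
  have hdecay : Real.exp (-lam) * Real.exp (-(lam * max a 0)) ≤
      Real.exp (-(lam * max (a + 1) 0)) := by
    rw [← Real.exp_add, Real.exp_le_exp]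
    have : max (a + 1) 0 ≤ 1 + max a 0 := max_le (by linarith [le_max_left a 0]) (by positivity)
    nlinarith
  have hq : 0 ≤ 1 - Real.exp (-lam) := sub_nonneg.2 (Real.exp_le_one_iff.2 (by linarith))
  rw [← measure_congr Ioc_ae_eq_Icc, ← Ioi_sdiff_Ioi,
    measure_sdiff (Set.Ioi_subset_Ioi (by linarith)) measurableSet_Ioi.nullMeasurableSet
      (measure_ne_top _ _),
    hν.measure_Ioi_eq, hν.measure_Ioi_eq, ← ENNReal.ofReal_sub _ (Real.exp_nonneg _),
    ← ENNReal.ofReal_mul hq]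
  exact ENNReal.ofReal_le_ofReal (by nlinarith)

theorem map_sub_const_Icc_le (hν : HasExpTail ν lam) (hlam : 0 ≤ lam) (c x : ℝ) :
    ν.map (· - c) (Icc x (x + 1)) ≤
      ENNReal.ofReal (1 - Real.exp (-lam)) * ν.map (· - c) (Ioi x) := by
  rw [Measure.map_apply (measurable_sub_const c) measurableSet_Icc,
    Measure.map_apply (measurable_sub_const c) measurableSet_Ioi, preimage_sub_const_Icc,
    preimage_sub_const_Ioi, add_right_comm]
  exact hν.measure_Icc_le hlam (x + c)

theorem map_sub_const_Iic_le (hν : HasExpTail ν lam) (c x : ℝ) :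
    ν.map (· - c) (Iic x) ≤ ν.map (· - c) (Iio x) := by
  have := hν.nullSingletonClass
  rw [Measure.map_apply (measurable_sub_const c) measurableSet_Iic,
    Measure.map_apply (measurable_sub_const c) measurableSet_Iio, preimage_sub_const_Iic,
    preimage_sub_const_Iio, measure_congr Iio_ae_eq_Iic]

end HasExpTail

section Conditioning

variable {Ω : Type*} [MeasurableSpace Ω] {μ : Measure Ω} [IsProbabilityMeasure μ]

theorem measure_forall_ne_mem_eq_lintegral {n : ℕ} {X : Fin n → Ω → ℝ}
    (hX : ∀ i, Measurable (X i)) (hindep : iIndepFun X μ) (j : Fin n)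
    {D : Fin n → Set (ℝ × ℝ)} (hD : ∀ i, MeasurableSet (D i)) :
    μ {ω | ∀ i ≠ j, (X j ω, X i ω) ∈ D i} =
      ∫⁻ x, ∏ i ∈ {j}ᶜ, μ.map (X i) (Prod.mk x ⁻¹' D i) ∂μ.map (X j) := by
  obtain ⟨m, rfl⟩ : ∃ m, n = m + 1 := Nat.exists_eq_add_one_of_ne_zero j.pos.ne'
  have : ∀ i, IsProbabilityMeasure (μ.map (X i)) :=
    fun i => Measure.isProbabilityMeasure_map (hX i).aemeasurable
  set G : Set (ℝ × (Fin m → ℝ)) := {p | ∀ k, (p.1, p.2 k) ∈ D (j.succAbove k)}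
  have hG : MeasurableSet G := by
    simp only [G, ofPred_forall]
    exact MeasurableSet.iInter fun k => (hD _).preimage (by fun_prop)
  have hevent : {ω | ∀ i ≠ j, (X j ω, X i ω) ∈ D i} =
      (fun ω i => X i ω) ⁻¹' (MeasurableEquiv.piFinSuccAbove (fun _ => ℝ) j ⁻¹' G) := by
    ext ω
    simp [G, Fin.forall_iff_succAbove j, Fin.succAbove_ne, Fin.removeNth]
  rw [hevent, ← Measure.map_apply (by fun_prop) (MeasurableEquiv.measurable _ hG),
    hindep.map_fun_eq_pi_map fun i => (hX i).aemeasurable,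
    (measurePreserving_piFinSuccAbove (fun i => μ.map (X i)) j).measure_preimage
      hG.nullMeasurableSet, Measure.prod_apply hG]
  refine lintegral_congr fun x => ?_
  have hsection : Prod.mk x ⁻¹' G = Set.pi univ fun k => Prod.mk x ⁻¹' D (j.succAbove k) := by
    ext y; simp [G]
  rw [hsection, Measure.pi_pi, ← Fin.image_succAbove_univ, prod_image fun _ _ _ _ h =>
    Fin.succAbove_right_injective h]

theorem measure_forall_ne_mem_le_prod_mul {n : ℕ} {X : Fin n → Ω → ℝ}
    (hX : ∀ i, Measurable (X i)) (hindep : iIndepFun X μ) (j : Fin n)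
    {D D' : Fin n → Set (ℝ × ℝ)} (hD : ∀ i, MeasurableSet (D i))
    (hD' : ∀ i, MeasurableSet (D' i)) (r : Fin n → ℝ≥0∞)
    (hr : ∀ i ≠ j, ∀ x,
      μ.map (X i) (Prod.mk x ⁻¹' D i) ≤ r i * μ.map (X i) (Prod.mk x ⁻¹' D' i)) :
    μ {ω | ∀ i ≠ j, (X j ω, X i ω) ∈ D i} ≤
      (∏ i ∈ {j}ᶜ, r i) * μ {ω | ∀ i ≠ j, (X j ω, X i ω) ∈ D' i} := by
  rw [measure_forall_ne_mem_eq_lintegral hX hindep j hD,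
    measure_forall_ne_mem_eq_lintegral hX hindep j hD', ← lintegral_const_mul _
      (Finset.measurable_prod _ fun i _ => measurable_measure_prodMk_left (hD' i))]
  refine lintegral_mono fun x => ?_
  rw [← prod_mul_distrib]
  exact prod_le_prod' fun i hi => hr i (by simpa using hi) x

end Conditioning

section Ranks

variable {ι : Type*}

def spacingSet (S : Finset ι) (i : ι) : Set (ℝ × ℝ) :=
  if i ∈ S then {q | q.1 ≤ q.2 ∧ q.2 ≤ q.1 + 1} else {q | q.2 ≤ q.1}

def rankSet (S : Finset ι) (i : ι) : Set (ℝ × ℝ) :=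
  if i ∈ S then {q | q.1 < q.2} else {q | q.2 < q.1}

theorem measurableSet_spacingSet (S : Finset ι) (i : ι) : MeasurableSet (spacingSet S i) := by
  unfold spacingSet
  split_ifs
  · rw [ofPred_and]
    exact (measurableSet_le (by fun_prop) (by fun_prop)).inter
      (measurableSet_le (by fun_prop) (by fun_prop))
  · exact measurableSet_le (by fun_prop) (by fun_prop)

theorem measurableSet_rankSet (S : Finset ι) (i : ι) : MeasurableSet (rankSet S i) := by
  unfold rankSet
  split_ifs
  · exact measurableSet_lt (by fun_prop) (by fun_prop)
  · exact measurableSet_lt (by fun_prop) (by fun_prop)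

variable {x : ι → ℝ} {j j' : ι} {S S' : Finset ι}

theorem mem_rankSet_iff (hj : j ∉ S) (h : ∀ i ≠ j, (x j, x i) ∈ rankSet S i) (i : ι) :
    i ∈ S ↔ x j < x i := by
  by_cases hij : i = j
  · subst hij; simp [hj]
  have hi := h i hij
  unfold rankSet at hi
  split_ifs at hi with hiS
  · simpa [hiS] using hi
  · simpa [hiS] using hi.le

theorem ne_of_forall_mem_rankSet (h : ∀ i ≠ j, (x j, x i) ∈ rankSet S i) {i : ι} (hij : i ≠ j) :
    x i ≠ x j := by
  have hi := h i hij
  unfold rankSet at hi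
  split_ifs at hi
  · exact hi.ne'
  · exact hi.ne

theorem card_lt_of_forall_mem_rankSet (hj : j ∉ S) (h : ∀ i ≠ j, (x j, x i) ∈ rankSet S i)
    (hj' : j' ∉ S') (h' : ∀ i ≠ j', (x j', x i) ∈ rankSet S' i) (hlt : x j < x j') :
    #S' < #S := by
  refine card_lt_card ⟨fun i hi => ?_, fun hsub => ?_⟩
  · rw [mem_rankSet_iff hj h]
    exact hlt.trans ((mem_rankSet_iff hj' h' i).1 hi)
  · exact hj' (hsub ((mem_rankSet_iff hj h j').2 hlt))

theorem eq_of_forall_mem_rankSet (hj : j ∉ S) (h : ∀ i ≠ j, (x j, x i) ∈ rankSet S i)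
    (hj' : j' ∉ S') (h' : ∀ i ≠ j', (x j', x i) ∈ rankSet S' i) (hcard : #S = #S') :
    j = j' ∧ S = S' := by
  rcases lt_trichotomy (x j) (x j') with hlt | heq | hgt
  · exact absurd (card_lt_of_forall_mem_rankSet hj h hj' h' hlt) hcard.le.not_gt
  · have hjj' : j = j' := by_contra fun hne => ne_of_forall_mem_rankSet h' hne heq
    subst hjj'
    exact ⟨rfl, Finset.ext fun i =>
      (mem_rankSet_iff hj h i).trans (mem_rankSet_iff hj' h' i).symm⟩
  · exact absurd (card_lt_of_forall_mem_rankSet hj' h' hj h hgt) hcard.ge.not_gt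

end Ranks

section OrderStatistic

variable {n : ℕ} (x : Fin n → ℝ)

theorem exists_orderStatistic {t : ℕ} (ht : 1 ≤ t) (htn : t ≤ n) :
    ∃ j S, j ∉ S ∧ #S = t - 1 ∧ (∀ i ∈ S, x j ≤ x i) ∧ ∀ i ∉ S, i ≠ j → x i ≤ x j := by
  set σ := Tuple.sort x
  have hmono : Monotone (x ∘ σ) := Tuple.monotone_sort x
  set k : Fin n := ⟨n - t, by omega⟩
  refine ⟨σ k, (Finset.Ioi k).map σ.toEmbedding, ?_, ?_, ?_, ?_⟩
  · simp
  · rw [card_map, Fin.card_Ioi]; simp [k]; omega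
  · intro i hi
    rw [mem_map_equiv, Finset.mem_Ioi] at hi
    simpa using hmono hi.le
  · intro i hi hij
    rw [mem_map_equiv, Finset.mem_Ioi, not_lt] at hi
    simpa using hmono hi

theorem exists_forall_mem_spacingSet {t : ℕ} (ht : 1 ≤ t)
    (hN : t ≤ #{i | (⨆ k, x k) - 1 ≤ x i}) :
    ∃ j S, j ∉ S ∧ #S = t - 1 ∧ ∀ i ≠ j, (x j, x i) ∈ spacingSet S i := by
  have htn : t ≤ n := hN.trans ((card_filter_le _ _).trans (by simp))
  obtain ⟨j, S, hjS, hS, habove, hbelow⟩ := exists_orderStatistic x ht htn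
  have hle_sup : ∀ i, x i ≤ ⨆ k, x k := le_ciSup (Set.finite_range x).bddAbove
  have hj : (⨆ k, x k) - 1 ≤ x j := by
    by_contra! hlt
    have hsub : ({i | (⨆ k, x k) - 1 ≤ x i} : Finset _) ⊆ S := fun i hi => by
      by_contra hiS
      have := hbelow i hiS (by rintro rfl; linarith [(mem_filter.1 hi).2])
      linarith [(mem_filter.1 hi).2]
    have := Finset.card_le_card hsub
    omega
  refine ⟨j, S, hjS, hS, fun i hij => ?_⟩
  unfold spacingSet
  split_ifs with hiS
  · exact ⟨habove i hiS, by linarith [hle_sup i]⟩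
  · exact hbelow i hiS hij

end OrderStatistic

section Events

variable {Ω ι : Type*}

def spacingEvent (X : ι → Ω → ℝ) (j : ι) (S : Finset ι) : Set Ω :=
  {ω | ∀ i ≠ j, (X j ω, X i ω) ∈ spacingSet S i}

def rankEvent (X : ι → Ω → ℝ) (j : ι) (S : Finset ι) : Set Ω :=
  {ω | ∀ i ≠ j, (X j ω, X i ω) ∈ rankSet S i}

theorem measurableSet_rankEvent [MeasurableSpace Ω] [Countable ι] {X : ι → Ω → ℝ}
    (hX : ∀ i, Measurable (X i)) (j : ι) (S : Finset ι) : MeasurableSet (rankEvent X j S) := by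
  simp only [rankEvent, ofPred_forall]
  exact .iInter fun i => .iInter fun _ =>
    (measurableSet_rankSet S i).preimage ((hX j).prodMk (hX i))

theorem pairwiseDisjoint_rankEvent (X : ι → Ω → ℝ) (t : ℕ) :
    ({p | p.1 ∉ p.2 ∧ #p.2 = t} : Set (ι × Finset ι)).PairwiseDisjoint
      fun p => rankEvent X p.1 p.2 := by
  rintro ⟨j, S⟩ ⟨hj, hS⟩ ⟨j', S'⟩ ⟨hj', hS'⟩ hne
  refine Set.disjoint_left.2 fun ω h h' => hne ?_
  obtain ⟨rfl, rfl⟩ := eq_of_forall_mem_rankSet (x := (X · ω)) hj h hj' h' (hS.trans hS'.symm)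
  rfl

variable [MeasurableSpace Ω] {μ : Measure Ω} [IsProbabilityMeasure μ]

theorem measure_spacingEvent_le {n : ℕ} {X : Fin n → Ω → ℝ} (hX : ∀ i, Measurable (X i))
    (hindep : iIndepFun X μ) {j : Fin n} {S : Finset (Fin n)} (hj : j ∉ S) {q : ℝ≥0∞}
    (hnear : ∀ i x, μ.map (X i) (Icc x (x + 1)) ≤ q * μ.map (X i) (Ioi x))
    (hbelow : ∀ i x, μ.map (X i) (Iic x) ≤ μ.map (X i) (Iio x)) :
    μ (spacingEvent X j S) ≤ q ^ #S * μ (rankEvent X j S) := by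
  calc μ (spacingEvent X j S)
      ≤ (∏ i ∈ {j}ᶜ, if i ∈ S then q else 1) * μ (rankEvent X j S) := by
        refine measure_forall_ne_mem_le_prod_mul hX hindep j (measurableSet_spacingSet S)
          (measurableSet_rankSet S) _ fun i _ x => ?_
        unfold spacingSet rankSet
        split_ifs
        · exact hnear i x
        · rw [one_mul]; exact hbelow i x
    _ = q ^ #S * μ (rankEvent X j S) := by
        rw [prod_ite_mem, Finset.inter_eq_right.2 (subset_compl_singleton.2 hj), prod_const]

end Events

theorem measure_le_of_subset_biUnion {Ω ι : Type*} [MeasurableSpace Ω] {μ : Measure Ω}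
    [IsProbabilityMeasure μ] {A : Set Ω} {I : Finset ι} {C E : ι → Set Ω} {K : ℝ≥0∞}
    (hA : A ⊆ ⋃ p ∈ I, C p) (hCE : ∀ p ∈ I, μ (C p) ≤ K * μ (E p))
    (hE : (I : Set ι).PairwiseDisjoint E) (hEm : ∀ p ∈ I, MeasurableSet (E p)) : μ A ≤ K :=
  calc μ A ≤ ∑ p ∈ I, μ (C p) := (measure_mono hA).trans (measure_biUnion_finset_le I C)
    _ ≤ ∑ p ∈ I, K * μ (E p) := sum_le_sum hCE
    _ = K * μ (⋃ p ∈ I, E p) := by rw [← mul_sum, measure_biUnion_finset hE hEm]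
    _ ≤ K := mul_le_of_le_one_right' prob_le_one

theorem stmt_10_general {Ω : Type} [MeasurableSpace Ω] (μ : Measure Ω) [IsProbabilityMeasure μ]
    (lam : ℝ) (hlam : 0 < lam) (n : ℕ)
    (T : Fin n → Ω → ℝ) (c : Fin n → ℝ)
    (hmeas : ∀ i, Measurable (T i))
    (hindep : iIndepFun T μ)
    (hexp : ∀ i, ∀ t : ℝ, 0 ≤ t →
      μ {ω | t < T i ω} = ENNReal.ofReal (Real.exp (-(lam * t))))
    (t : ℕ) (ht : 1 ≤ t) :
    μ {ω | t ≤ (Finset.univ.filter fun i : Fin n =>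
        (⨆ j : Fin n, (T j ω - c j)) - 1 ≤ T i ω - c i).card} ≤
      ENNReal.ofReal ((1 - Real.exp (-lam)) ^ (t - 1)) := by
  set X : Fin n → Ω → ℝ := fun i ω => T i ω - c i
  have hX : ∀ i, Measurable (X i) := fun i => (hmeas i).sub_const _
  have hlaw : ∀ i, μ.map (X i) = (μ.map (T i)).map (· - c i) := fun i =>
    (Measure.map_map (measurable_sub_const _) (hmeas i)).symm
  have htail : ∀ i, HasExpTail (μ.map (T i)) lam := fun i s hs => by
    rw [Measure.map_apply (hmeas i) measurableSet_Ioi]; exact hexp i s hs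
  have : ∀ i, IsProbabilityMeasure (μ.map (T i)) :=
    fun i => Measure.isProbabilityMeasure_map (hmeas i).aemeasurable
  rw [ENNReal.ofReal_pow (sub_nonneg.2 (Real.exp_le_one_iff.2 (by linarith)))]
  refine measure_le_of_subset_biUnion
    (I := ({p | p.1 ∉ p.2 ∧ #p.2 = t - 1} : Finset (Fin n × Finset (Fin n))))
    (C := fun p => spacingEvent X p.1 p.2) (E := fun p => rankEvent X p.1 p.2) ?_ ?_
    ((pairwiseDisjoint_rankEvent X (t - 1)).subset fun p hp => (mem_filter.1 hp).2)
    fun p _ => measurableSet_rankEvent hX p.1 p.2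
  · intro ω hω
    obtain ⟨j, S, hjS, hS, hmem⟩ := exists_forall_mem_spacingSet (X · ω) ht hω
    exact mem_biUnion (x := (j, S)) (by simp [hjS, hS]) hmem
  · rintro ⟨j, S⟩ hp
    obtain ⟨-, hjS, hS⟩ := mem_filter.1 hp
    rw [← hS]
    refine measure_spacingEvent_le hX (hindep.comp _ fun i => measurable_sub_const (c i)) hjS
      (fun i x => ?_) (fun i x => ?_)
    · rw [hlaw]; exact (htail i).map_sub_const_Icc_le hlam.le (c i) x
    · rw [hlaw]; exact (htail i).map_sub_const_Iic_le (c i) x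

/-- Let `T 1, …, T n` be independent exponential random variables with
rate `λ > 0` and `c i` real constants. With `M = max_i (T i - c i)` and
`N = #{i : T i - c i ≥ M - 1}`, for every integer `t ≥ 1` we have
`P[N ≥ t] ≤ (1 - e^{-λ})^{t-1}`. -/
theorem stmt_10 {Ω : Type} [MeasurableSpace Ω] (μ : Measure Ω) [IsProbabilityMeasure μ]
    (lam : ℝ) (hlam : 0 < lam) (n : ℕ) (hn : 0 < n)
    (T : Fin n → Ω → ℝ) (c : Fin n → ℝ)
    (hmeas : ∀ i, Measurable (T i))
    (hindep : iIndepFun T μ)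
    (hexp : ∀ i, ∀ t : ℝ, 0 ≤ t →
      μ {ω | t < T i ω} = ENNReal.ofReal (Real.exp (-(lam * t))))
    (t : ℕ) (ht : 1 ≤ t) :
    μ {ω | t ≤ (Finset.univ.filter fun i : Fin n =>
        (⨆ j : Fin n, (T j ω - c j)) - 1 ≤ T i ω - c i).card} ≤
      ENNReal.ofReal ((1 - Real.exp (-lam)) ^ (t - 1)) :=
  stmt_10_general μ lam hlam n T c hmeas hindep hexp t ht
end

section
/- Let λ > 0, let T_1, …, T_n be independent exponentially distributed random variables with rate λ, and let c_1, …, c_n be real constants. Let M := max_{1 ≤ i ≤ n} (T_i − c_i). Then the probability that there exist at least two distinct indices i with T_i − c_i ≥ M − 1 is at most 1 − e^{−λ}. -/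
open MeasureTheory ProbabilityTheory Set Filter Topology

/-!
Write `Xᵢ = Tᵢ - cᵢ`. The event in question is disjoint from each event `Aᵢ` that `Xᵢ` exceeds
every other `Xⱼ` by more than `1`, and the `Aᵢ` are pairwise disjoint. Conditionally on
`(Tⱼ)_{j ≠ i}`, memorylessness gives `P(Tᵢ > s + 1) ≥ e^{-λ} P(Tᵢ > s)` at every level `s`,
hence `P(Aᵢ) ≥ e^{-λ} P(Bᵢ)`, where `Bᵢ` is the event that `Xᵢ` is the strict maximum. Ties have
probability zero, so the `Bᵢ` cover almost everything and `P(⋃ Aᵢ) ≥ e^{-λ}`.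
-/

section ExponentialTail

variable {ν : Measure ℝ} [IsProbabilityMeasure ν] {lam : ℝ}

theorem measure_Ioi_eq_exp_max
    (h : ∀ t, 0 ≤ t → ν (Ioi t) = ENNReal.ofReal (Real.exp (-(lam * t)))) (s : ℝ) :
    ν (Ioi s) = ENNReal.ofReal (Real.exp (-(lam * max s 0))) := by
  rcases le_or_gt 0 s with hs | hs
  · rw [max_eq_left hs, h s hs]
  · have h0 : ν (Ioi 0) = 1 := by simp [h 0 le_rfl]
    rw [max_eq_right hs.le, mul_zero, neg_zero, Real.exp_zero, ENNReal.ofReal_one]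
    exact le_antisymm prob_le_one (h0 ▸ measure_mono (Ioi_subset_Ioi hs.le))

theorem measure_singleton_eq_zero_of_measure_Ioi_eq_exp
    (h : ∀ t, 0 ≤ t → ν (Ioi t) = ENNReal.ofReal (Real.exp (-(lam * t)))) (s : ℝ) :
    ν {s} = 0 := by
  have hcont : Continuous fun x => ν (Ioi x) := by
    simp_rw [measure_Ioi_eq_exp_max h]
    exact ENNReal.continuous_ofReal.comp (by fun_prop)
  -- `{s} ⊆ Ioc (s - ε) s`, whose measure vanishes as `ε → 0`.
  have hbound : ∀ ε > 0, ν {s} ≤ ν (Ioi (s - ε)) - ν (Ioi s) := fun ε hε => by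
    rw [← measure_sdiff (Ioi_subset_Ioi (by linarith)) measurableSet_Ioi.nullMeasurableSet
      (measure_ne_top _ _)]
    exact measure_mono fun x hx => ⟨show s - ε < x by rw [hx]; linarith, by simp [hx.le]⟩
  have hlim : Tendsto (fun ε => ν (Ioi (s - ε)) - ν (Ioi s)) (𝓝[>] 0) (𝓝 0) := by
    have hleft : Tendsto (fun ε => ν (Ioi (s - ε))) (𝓝 0) (𝓝 (ν (Ioi s))) := by
      simpa [Function.comp_def] using (hcont.comp (continuous_sub_left s)).tendsto 0
    have := ENNReal.Tendsto.sub hleft (tendsto_const_nhds (x := ν (Ioi s)))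
      (Or.inl (measure_ne_top _ _))
    simpa using this.mono_left nhdsWithin_le_nhds
  exact le_antisymm (ge_of_tendsto hlim (eventually_nhdsWithin_of_forall hbound)) bot_le

theorem exp_neg_mul_measure_Ioi_le (hlam : 0 ≤ lam)
    (h : ∀ t, 0 ≤ t → ν (Ioi t) = ENNReal.ofReal (Real.exp (-(lam * t)))) (s : ℝ) :
    ENNReal.ofReal (Real.exp (-lam)) * ν (Ioi s) ≤ ν (Ioi (s + 1)) := by
  rw [measure_Ioi_eq_exp_max h, measure_Ioi_eq_exp_max h,
    ← ENNReal.ofReal_mul (Real.exp_pos _).le, ← Real.exp_add]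
  refine ENNReal.ofReal_le_ofReal (Real.exp_le_exp.2 ?_)
  have hmax : max (s + 1) 0 ≤ 1 + max s 0 := max_le (by linarith [le_max_left s 0]) (by positivity)
  linarith [mul_le_mul_of_nonneg_left hmax hlam]

theorem exp_neg_mul_measure_iInter_Ioi_le {κ : Type*} [Finite κ] (hlam : 0 ≤ lam)
    (h : ∀ t, 0 ≤ t → ν (Ioi t) = ENNReal.ofReal (Real.exp (-(lam * t)))) (b : κ → ℝ) :
    ENNReal.ofReal (Real.exp (-lam)) * ν (⋂ k, Ioi (b k)) ≤ ν (⋂ k, Ioi (b k + 1)) := by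
  rcases isEmpty_or_nonempty κ with _ | _
  · simpa using ENNReal.ofReal_le_one.2 (Real.exp_le_one_iff.2 (neg_nonpos.2 hlam))
  · obtain ⟨k₀, hk₀⟩ := Finite.exists_max b
    have hmax : ∀ a, ⋂ k, Ioi (b k + a) = Ioi (b k₀ + a) := fun a => by
      ext t
      simp only [mem_iInter, mem_Ioi]
      exact ⟨fun ht => ht k₀, fun ht k => by linarith [hk₀ k]⟩
    have h0 : ⋂ k, Ioi (b k) = Ioi (b k₀) := by simpa only [add_zero] using hmax 0
    rw [h0, hmax]
    exact exp_neg_mul_measure_Ioi_le hlam h (b k₀)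

end ExponentialTail

section Independence

variable {Ω γ : Type*} [MeasurableSpace Ω] [MeasurableSpace γ] {μ : Measure Ω}
  [IsFiniteMeasure μ] {X : Ω → ℝ} {Y : Ω → γ}

theorem ProbabilityTheory.IndepFun.measure_prodMk_mem_eq_lintegral (hX : Measurable X)
    (hY : Measurable Y) (hind : Y ⟂ᵢ[μ] X) {S : Set (γ × ℝ)} (hS : MeasurableSet S) :
    μ {ω | (Y ω, X ω) ∈ S} = ∫⁻ y, μ.map X (Prod.mk y ⁻¹' S) ∂μ.map Y := by
  rw [← Measure.prod_apply hS, ← (indepFun_iff_map_prod_eq_prod_map_map hY.aemeasurable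
    hX.aemeasurable).1 hind, Measure.map_apply (hY.prodMk hX) hS]
  rfl

theorem ProbabilityTheory.IndepFun.measure_eq_comp_eq_zero (hX : Measurable X)
    (hY : Measurable Y) (hind : Y ⟂ᵢ[μ] X) (hatom : ∀ s, μ.map X {s} = 0) {g : γ → ℝ}
    (hg : Measurable g) :
    μ {ω | X ω = g (Y ω)} = 0 := by
  have hS : MeasurableSet {p : γ × ℝ | p.2 = g p.1} :=
    measurableSet_eq_fun measurable_snd (hg.comp measurable_fst)
  rw [show {ω | X ω = g (Y ω)} = {ω | (Y ω, X ω) ∈ {p : γ × ℝ | p.2 = g p.1}} from rfl,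
    hind.measure_prodMk_mem_eq_lintegral hX hY hS]
  simp [Set.preimage, hatom]

end Independence

section LeadsBy

variable {ι : Type*}

def LeadsBy (x : ι → ℝ) (a : ℝ) (i : ι) : Prop := ∀ j ≠ i, x j + a < x i

theorem LeadsBy.eq_of_iSup_sub_one_le [Finite ι] {x : ι → ℝ} {i p : ι} (hi : LeadsBy x 1 i)
    (hp : (⨆ k, x k) - 1 ≤ x p) : p = i := by
  by_contra hpi
  have := le_ciSup (Finite.bddAbove_range x) i
  linarith [hi p hpi]

theorem pairwise_disjoint_setOf_leadsBy {Ω : Type*} (X : Ω → ι → ℝ) {a : ℝ} (ha : 0 ≤ a) :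
    Pairwise (Function.onFun Disjoint fun i => {ω | LeadsBy (X ω) a i}) := by
  intro i j hij
  refine disjoint_left.2 fun ω hi hj => ?_
  linarith [hi j hij.symm, hj i hij]

theorem exists_leadsBy_zero_of_injective [Finite ι] [Nonempty ι] {x : ι → ℝ}
    (hx : Function.Injective x) : ∃ i, LeadsBy x 0 i := by
  obtain ⟨i, hi⟩ := Finite.exists_max x
  exact ⟨i, fun j hj => by simpa using (hi j).lt_of_ne (hx.ne hj)⟩

theorem measurableSet_setOf_leadsBy [Countable ι] {Ω : Type*} [MeasurableSpace Ω]
    {X : ι → Ω → ℝ} (hX : ∀ i, Measurable (X i)) (a : ℝ) (i : ι) :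
    MeasurableSet {ω | LeadsBy (fun j => X j ω) a i} := by
  simp only [LeadsBy, ofPred_forall]
  exact .iInter fun j => .iInter fun _ => measurableSet_lt ((hX j).add_const a) (hX i)

end LeadsBy

section ExponentialRace

variable {Ω ι : Type*} [MeasurableSpace Ω] {μ : Measure Ω} [IsProbabilityMeasure μ]
  [Fintype ι] {T : ι → Ω → ℝ}

theorem exp_neg_mul_measure_leadsBy_le [DecidableEq ι] {lam : ℝ} (hlam : 0 ≤ lam)
    (hmeas : ∀ i, Measurable (T i)) (hindep : iIndepFun T μ) (c : ι → ℝ) (a : ℝ) {i : ι}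
    (hexp : ∀ t, 0 ≤ t → μ.map (T i) (Ioi t) = ENNReal.ofReal (Real.exp (-(lam * t)))) :
    ENNReal.ofReal (Real.exp (-lam)) * μ {ω | LeadsBy (fun j => T j ω - c j) a i} ≤
      μ {ω | LeadsBy (fun j => T j ω - c j) (a + 1) i} := by
  have := Measure.isProbabilityMeasure_map (μ := μ) (hmeas i).aemeasurable
  let Y : Ω → ({i}ᶜ : Finset ι) → ℝ := fun ω j => T j ω
  have hY : Measurable Y := measurable_pi_lambda _ fun j => hmeas j
  have hind : Y ⟂ᵢ[μ] T i := (hindep.indepFun_finset {i}ᶜ {i} (by simp) hmeas).comp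
    measurable_id (measurable_pi_apply (⟨i, Finset.mem_singleton_self i⟩ : ({i} : Finset ι)))
  -- Conditionally on the other times, leading by `a` means `T i` exceeds finitely many levels.
  let S : ℝ → Set ((({i}ᶜ : Finset ι) → ℝ) × ℝ) :=
    fun a => {p | p.2 ∈ ⋂ j, Ioi (p.1 j - c j + c i + a)}
  have hS : ∀ a, MeasurableSet (S a) := fun a => by
    simp only [S, mem_iInter, mem_Ioi, ofPred_forall]
    exact .iInter fun j => measurableSet_lt
      ((((measurable_pi_apply j).comp measurable_fst).sub_const _).add_const _ |>.add_const _)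
      measurable_snd
  have hset : ∀ a, {ω | LeadsBy (fun j => T j ω - c j) a i} = {ω | (Y ω, T i ω) ∈ S a} := by
    intro a
    ext ω
    simp only [LeadsBy, S, Y, mem_ofPred_eq, mem_iInter, mem_Ioi, Subtype.forall,
      Finset.mem_compl, Finset.mem_singleton]
    exact forall₂_congr fun j _ => by constructor <;> intro h <;> linarith
  have hlaw : ∀ a, μ {ω | LeadsBy (fun j => T j ω - c j) a i} =
      ∫⁻ y, μ.map (T i) (⋂ j, Ioi (y j - c j + c i + a)) ∂μ.map Y := fun a => by
    rw [hset, hind.measure_prodMk_mem_eq_lintegral (hmeas i) hY (hS a)]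
    rfl
  calc ENNReal.ofReal (Real.exp (-lam)) * μ {ω | LeadsBy (fun j => T j ω - c j) a i}
      = ∫⁻ y, ENNReal.ofReal (Real.exp (-lam)) *
          μ.map (T i) (⋂ j, Ioi (y j - c j + c i + a)) ∂μ.map Y := by
        rw [hlaw, lintegral_const_mul' _ _ ENNReal.ofReal_ne_top]
    _ ≤ ∫⁻ y, μ.map (T i) (⋂ j, Ioi (y j - c j + c i + a + 1)) ∂μ.map Y :=
        lintegral_mono fun y => exp_neg_mul_measure_iInter_Ioi_le hlam hexp _
    _ = μ {ω | LeadsBy (fun j => T j ω - c j) (a + 1) i} := by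
        simp only [hlaw, add_assoc]

theorem ae_injective_sub_of_iIndepFun (hmeas : ∀ i, Measurable (T i)) (hindep : iIndepFun T μ)
    (hatom : ∀ i s, μ.map (T i) {s} = 0) (c : ι → ℝ) :
    ∀ᵐ ω ∂μ, Function.Injective fun j => T j ω - c j := by
  have hpair : ∀ i j, ∀ᵐ ω ∂μ, T i ω - c i = T j ω - c j → i = j := by
    intro i j
    rcases eq_or_ne i j with rfl | hij
    · exact .of_forall fun _ _ => rfl
    rw [ae_iff]
    refine measure_mono_null (fun ω hω => ?_) ((hindep.indepFun hij.symm).measure_eq_comp_eq_zero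
      (hmeas i) (hmeas j) (hatom i) (measurable_add_const (c i - c j)))
    have := (Classical.not_imp.1 hω).1
    change T i ω = T j ω + (c i - c j)
    linarith
  filter_upwards [ae_all_iff.2 fun i => ae_all_iff.2 (hpair i)] with ω hω i j using hω i j

theorem exp_neg_le_measure_iUnion_leadsBy_one [Nonempty ι] {lam : ℝ} (hlam : 0 ≤ lam)
    (hmeas : ∀ i, Measurable (T i)) (hindep : iIndepFun T μ) (c : ι → ℝ)
    (hexp : ∀ i, ∀ t, 0 ≤ t → μ.map (T i) (Ioi t) = ENNReal.ofReal (Real.exp (-(lam * t)))) :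
    ENNReal.ofReal (Real.exp (-lam)) ≤ μ (⋃ i, {ω | LeadsBy (fun j => T j ω - c j) 1 i}) := by
  have hmeasX : ∀ j, Measurable fun ω => T j ω - c j := fun j => (hmeas j).sub_const (c j)
  have hunion : ∀ a, 0 ≤ a → μ (⋃ i, {ω | LeadsBy (fun j => T j ω - c j) a i}) =
      ∑ i, μ {ω | LeadsBy (fun j => T j ω - c j) a i} := fun a ha => by
    rw [measure_iUnion (pairwise_disjoint_setOf_leadsBy _ ha)
      (measurableSet_setOf_leadsBy hmeasX a), tsum_fintype]
  -- Almost surely there are no ties, so almost surely some index leads.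
  have hcover : μ (⋃ i, {ω | LeadsBy (fun j => T j ω - c j) 0 i}) = 1 := by
    have hatom : ∀ i s, μ.map (T i) {s} = 0 := fun i => by
      have := Measure.isProbabilityMeasure_map (μ := μ) (hmeas i).aemeasurable
      exact measure_singleton_eq_zero_of_measure_Ioi_eq_exp (hexp i)
    rw [← prob_compl_eq_zero_iff (.iUnion (measurableSet_setOf_leadsBy hmeasX 0)),
      measure_eq_zero_iff_ae_notMem]
    filter_upwards [ae_injective_sub_of_iIndepFun hmeas hindep hatom c] with ω hinj
    exact not_not.2 (mem_iUnion.2 (exists_leadsBy_zero_of_injective hinj))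
  classical
  calc ENNReal.ofReal (Real.exp (-lam))
      = ENNReal.ofReal (Real.exp (-lam)) * ∑ i, μ {ω | LeadsBy (fun j => T j ω - c j) 0 i} := by
        rw [← hunion 0 le_rfl, hcover, mul_one]
    _ = ∑ i, ENNReal.ofReal (Real.exp (-lam)) * μ {ω | LeadsBy (fun j => T j ω - c j) 0 i} :=
        Finset.mul_sum _ _ _
    _ ≤ ∑ i, μ {ω | LeadsBy (fun j => T j ω - c j) 1 i} := Finset.sum_le_sum fun i _ => by
        simpa only [zero_add] using exp_neg_mul_measure_leadsBy_le hlam hmeas hindep c 0 (hexp i)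
    _ = μ (⋃ i, {ω | LeadsBy (fun j => T j ω - c j) 1 i}) := (hunion 1 zero_le_one).symm

end ExponentialRace

theorem stmt_11_general {Ω : Type} [MeasurableSpace Ω] (μ : Measure Ω) [IsProbabilityMeasure μ]
    (lam : ℝ) (hlam : 0 < lam) (n : ℕ)
    (T : Fin n → Ω → ℝ) (c : Fin n → ℝ)
    (hmeas : ∀ i, Measurable (T i))
    (hindep : iIndepFun T μ)
    (hexp : ∀ i, ∀ t : ℝ, 0 ≤ t →
      μ {ω | t < T i ω} = ENNReal.ofReal (Real.exp (-(lam * t)))) :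
    μ {ω | ∃ i j : Fin n, i ≠ j ∧
        (⨆ k : Fin n, (T k ω - c k)) - 1 ≤ T i ω - c i ∧
        (⨆ k : Fin n, (T k ω - c k)) - 1 ≤ T j ω - c j} ≤
      ENNReal.ofReal (1 - Real.exp (-lam)) := by
  rcases isEmpty_or_nonempty (Fin n) with _ | _
  · simp
  have hexp' : ∀ i, ∀ t, 0 ≤ t → μ.map (T i) (Ioi t) = ENNReal.ofReal (Real.exp (-(lam * t))) :=
    fun i t ht => by rw [Measure.map_apply (hmeas i) measurableSet_Ioi]; exact hexp i t ht
  have hsub : {ω | ∃ i j : Fin n, i ≠ j ∧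
      (⨆ k : Fin n, (T k ω - c k)) - 1 ≤ T i ω - c i ∧
      (⨆ k : Fin n, (T k ω - c k)) - 1 ≤ T j ω - c j} ⊆
      (⋃ i, {ω | LeadsBy (fun j => T j ω - c j) 1 i})ᶜ := by
    rintro ω ⟨p, q, hpq, hp, hq⟩ hlead
    obtain ⟨i, hi⟩ := mem_iUnion.1 hlead
    exact hpq ((hi.eq_of_iSup_sub_one_le hp).trans (hi.eq_of_iSup_sub_one_le hq).symm)
  calc _ ≤ μ (⋃ i, {ω | LeadsBy (fun j => T j ω - c j) 1 i})ᶜ := measure_mono hsub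
    _ = 1 - μ (⋃ i, {ω | LeadsBy (fun j => T j ω - c j) 1 i}) := prob_compl_eq_one_sub
        (.iUnion (measurableSet_setOf_leadsBy (fun j => (hmeas j).sub_const (c j)) 1))
    _ ≤ 1 - ENNReal.ofReal (Real.exp (-lam)) := tsub_le_tsub_left
        (exp_neg_le_measure_iUnion_leadsBy_one hlam.le hmeas hindep c hexp') 1
    _ = ENNReal.ofReal (1 - Real.exp (-lam)) := by
        rw [ENNReal.ofReal_sub 1 (Real.exp_pos _).le, ENNReal.ofReal_one]

/-- Let `T 1, …, T n` be independent exponential random variables with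
rate `λ > 0` and `c i` real constants, and let `M = max_i (T i - c i)`. The probability
that at least two distinct indices `i` satisfy `T i - c i ≥ M - 1` is at most
`1 - e^{-λ}`. -/
theorem stmt_11 {Ω : Type} [MeasurableSpace Ω] (μ : Measure Ω) [IsProbabilityMeasure μ]
    (lam : ℝ) (hlam : 0 < lam) (n : ℕ) (hn : 0 < n)
    (T : Fin n → Ω → ℝ) (c : Fin n → ℝ)
    (hmeas : ∀ i, Measurable (T i))
    (hindep : iIndepFun T μ)
    (hexp : ∀ i, ∀ t : ℝ, 0 ≤ t →
      μ {ω | t < T i ω} = ENNReal.ofReal (Real.exp (-(lam * t)))) :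
    μ {ω | ∃ i j : Fin n, i ≠ j ∧
        (⨆ k : Fin n, (T k ω - c k)) - 1 ≤ T i ω - c i ∧
        (⨆ k : Fin n, (T k ω - c k)) - 1 ≤ T j ω - c j} ≤
      ENNReal.ofReal (1 - Real.exp (-lam)) :=
  stmt_11_general μ lam hlam n T c hmeas hindep hexp
end

section
/- Let n ≥ 2 and let T_1, …, T_n be independent and identically distributed exponential random variables with rate ε > 0. Let M₁ be the largest of the values T_1, …, T_n and let M₂ be the second-largest value, i.e., the maximum of the multiset {T_1, …, T_n} after removing one occurrence of M₁. Then P[M₁ ≤ M₂ + 1] = 1 − e^{−ε}. -/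
/-!
Write `Sᵢ` for the largest of the `Tⱼ` with `j ≠ i`. The event `M₁ > M₂ + 1` is the disjoint
union over `i` of the events `Sᵢ + 1 < Tᵢ`. Since `Sᵢ ≥ 0` is independent of `Tᵢ`, memorylessness
of the exponential law gives `P[Sᵢ + 1 < Tᵢ] = e^{-ε} P[Sᵢ < Tᵢ]`, and the events `Sᵢ < Tᵢ` are
disjoint and cover everything except a tie `Tᵢ = Tⱼ`, which has probability zero because the
exponential law has no atoms. Summing over `i` gives `P[M₁ > M₂ + 1] = e^{-ε}`.
-/

open MeasureTheory ProbabilityTheory Filter Topology Function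
open scoped ENNReal

section SecondLargest

variable {ι : Type*} [Finite ι] (x : ι → ℝ)

lemma le_iSup_ne {i j : ι} (h : j ≠ i) : x j ≤ ⨆ k : {k // k ≠ i}, x k.1 :=
  le_ciSup (f := fun k : {k // k ≠ i} => x k.1) (Set.finite_range _).bddAbove ⟨j, h⟩

lemma pairwise_disjoint_setOf_iSup_ne_add_lt {Ω : Type*} (T : ι → Ω → ℝ) {t : ℝ} (ht : 0 ≤ t) :
    Pairwise (Disjoint on fun i => {ω | (⨆ j : {j // j ≠ i}, T j.1 ω) + t < T i ω}) := by
  intro i j hij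
  refine Set.disjoint_left.2 fun ω (hi : _ < T i ω) (hj : _ < T j ω) => ?_
  linarith [le_iSup_ne (T · ω) hij, le_iSup_ne (T · ω) hij.symm]

variable [Nontrivial ι]

lemma iSup_le_iInf_iSup_ne_add_iff {t : ℝ} (ht : 0 ≤ t) :
    (⨆ i, x i) ≤ (⨅ i, ⨆ j : {j // j ≠ i}, x j.1) + t ↔
      ∀ i, x i ≤ (⨆ j : {j // j ≠ i}, x j.1) + t := by
  constructor
  · intro h i
    calc x i ≤ ⨆ i, x i := le_ciSup (Set.finite_range _).bddAbove i
      _ ≤ (⨅ i, ⨆ j : {j // j ≠ i}, x j.1) + t := h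
      _ ≤ (⨆ j : {j // j ≠ i}, x j.1) + t := by
        gcongr; exact ciInf_le (Set.finite_range _).bddBelow i
  · intro h
    obtain ⟨i, hi⟩ := exists_eq_ciSup_of_finite (f := x)
    rw [← hi, ← sub_le_iff_le_add]
    refine le_ciInf fun k => ?_
    rcases eq_or_ne k i with rfl | hki
    · linarith [h k]
    · linarith [le_iSup_ne x hki.symm]

lemma exists_iSup_ne_lt_of_injective (hx : Injective x) :
    ∃ i, (⨆ j : {j // j ≠ i}, x j.1) < x i := by
  obtain ⟨i, hi⟩ := exists_eq_ciSup_of_finite (f := x)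
  obtain ⟨j, hj⟩ := exists_ne i
  have : Nonempty {j // j ≠ i} := ⟨⟨j, hj⟩⟩
  obtain ⟨⟨k, hk⟩, hk_eq⟩ := exists_eq_ciSup_of_finite (f := fun j : {j // j ≠ i} => x j.1)
  refine ⟨i, hk_eq ▸ lt_of_le_of_ne ?_ (hx.ne hk)⟩
  rw [hi]
  exact le_ciSup (Set.finite_range x).bddAbove k

end SecondLargest

namespace ProbabilityTheory

variable {Ω : Type*} [MeasurableSpace Ω] {μ : Measure Ω}

lemma IndepFun.measure_mem_eq_lintegral {α β : Type*} [MeasurableSpace α]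
    [MeasurableSpace β] [IsFiniteMeasure μ] {X : Ω → α} {Y : Ω → β} (hind : IndepFun X Y μ)
    (hX : Measurable X) (hY : Measurable Y) {s : Set (α × β)} (hs : MeasurableSet s) :
    μ {ω | (X ω, Y ω) ∈ s} = ∫⁻ x, μ {ω | (x, Y ω) ∈ s} ∂(μ.map X) := by
  change μ ((fun ω => (X ω, Y ω)) ⁻¹' s) = _
  rw [← Measure.map_apply (hX.prodMk hY) hs,
    (indepFun_iff_map_prod_eq_prod_map_map hX.aemeasurable hY.aemeasurable).mp hind,
    Measure.prod_apply hs]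
  refine lintegral_congr fun x => ?_
  exact Measure.map_apply hY (measurable_prodMk_left hs)

lemma measure_eq_eq_zero_of_tendsto [IsFiniteMeasure μ] {Y : Ω → ℝ} (hY : Measurable Y) {x : ℝ}
    (h : Tendsto (fun t => μ {ω | t < Y ω}) (𝓝[<] x) (𝓝 (μ {ω | x < Y ω}))) :
    μ {ω | Y ω = x} = 0 := by
  have hlim : Tendsto (fun t => μ {ω | t < Y ω} - μ {ω | x < Y ω}) (𝓝[<] x) (𝓝 0) := by
    simpa only [tsub_self] using
      ENNReal.Tendsto.sub h tendsto_const_nhds (.inr (measure_ne_top μ {ω | x < Y ω}))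
  refine le_antisymm (ge_of_tendsto hlim ?_) zero_le
  filter_upwards [self_mem_nhdsWithin] with t (ht : t < x)
  calc μ {ω | Y ω = x} ≤ μ ({ω | t < Y ω} \ {ω | x < Y ω}) :=
        measure_mono fun ω (h : Y ω = x) => ⟨show t < Y ω by rw [h]; exact ht, by simp [h]⟩
    _ = _ := measure_sdiff (fun ω (h : x < Y ω) => ht.trans h)
        (measurableSet_lt measurable_const hY).nullMeasurableSet (measure_ne_top μ _)

lemma IndepFun.measure_eq_eq_zero [IsFiniteMeasure μ] {X Y : Ω → ℝ}
    (hind : IndepFun X Y μ) (hX : Measurable X) (hY : Measurable Y)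
    (hatom : ∀ x, μ {ω | Y ω = x} = 0) :
    μ {ω | X ω = Y ω} = 0 := by
  have hset : {ω | X ω = Y ω} = {ω | (X ω, Y ω) ∈ {p : ℝ × ℝ | p.2 = p.1}} := by
    ext; simp [eq_comm]
  rw [hset,
    hind.measure_mem_eq_lintegral hX hY (measurableSet_eq_fun measurable_snd measurable_fst)]
  simp [hatom]

lemma iIndepFun.indepFun_iSup_ne {ι : Type*} [Fintype ι] {T : ι → Ω → ℝ}
    (hindep : iIndepFun T μ) (hmeas : ∀ i, Measurable (T i)) (i : ι) :
    IndepFun (fun ω => ⨆ j : {j // j ≠ i}, T j.1 ω) (T i) μ := by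
  classical
  exact (hindep.indepFun_finset {i}ᶜ {i} (by simp) hmeas).comp
    (φ := fun v : ({i}ᶜ : Finset ι) → ℝ => ⨆ j : {j // j ≠ i}, v ⟨j.1, by simpa using j.2⟩)
    (ψ := fun v : ({i} : Finset ι) → ℝ => v ⟨i, Finset.mem_singleton_self i⟩)
    (.iSup fun _ => measurable_pi_apply _) (measurable_pi_apply _)

section ExponentialTail

variable [IsProbabilityMeasure μ] {eps : ℝ} {Y : Ω → ℝ}
  (hexp : ∀ t : ℝ, 0 ≤ t → μ {ω | t < Y ω} = ENNReal.ofReal (Real.exp (-(eps * t))))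
include hexp

lemma measure_lt_eq_ofReal_exp_max (t : ℝ) :
    μ {ω | t < Y ω} = ENNReal.ofReal (Real.exp (-(eps * max t 0))) := by
  rcases le_total 0 t with ht | ht
  · rw [max_eq_left ht, hexp t ht]
  · rw [max_eq_right ht, mul_zero, neg_zero, Real.exp_zero, ENNReal.ofReal_one]
    refine le_antisymm prob_le_one ?_
    calc (1 : ℝ≥0∞) = μ {ω | 0 < Y ω} := by simpa using (hexp 0 le_rfl).symm
      _ ≤ μ {ω | t < Y ω} := measure_mono fun ω (h : 0 < Y ω) => ht.trans_lt h

lemma ae_pos_of_exp_tail (hY : Measurable Y) : ∀ᵐ ω ∂μ, 0 < Y ω := by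
  rw [ae_iff_measure_eq (measurableSet_lt measurable_const hY).nullMeasurableSet, measure_univ]
  simpa using hexp 0 le_rfl

lemma measure_eq_eq_zero_of_exp_tail (hY : Measurable Y) (x : ℝ) : μ {ω | Y ω = x} = 0 := by
  refine measure_eq_eq_zero_of_tendsto hY ?_
  simp only [measure_lt_eq_ofReal_exp_max hexp]
  exact ((ENNReal.continuous_ofReal.comp (by fun_prop)).tendsto x).mono_left nhdsWithin_le_nhds

lemma IndepFun.measure_add_lt_eq {X : Ω → ℝ} (hind : IndepFun X Y μ)
    (hX : Measurable X) (hY : Measurable Y) (hX0 : ∀ᵐ ω ∂μ, 0 ≤ X ω) {t : ℝ} (ht : 0 ≤ t) :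
    μ {ω | X ω + t < Y ω} = ENNReal.ofReal (Real.exp (-(eps * t))) * μ {ω | X ω < Y ω} := by
  have hsplit : ∀ s, 0 ≤ s → μ {ω | X ω + s < Y ω} = ENNReal.ofReal (Real.exp (-(eps * s))) *
      ∫⁻ x, ENNReal.ofReal (Real.exp (-(eps * x))) ∂(μ.map X) := by
    intro s hs
    change μ {ω | (X ω, Y ω) ∈ {p : ℝ × ℝ | p.1 + s < p.2}} = _
    rw [hind.measure_mem_eq_lintegral hX hY
      (measurableSet_lt (measurable_fst.add_const s) measurable_snd),
      ← lintegral_const_mul _ (by fun_prop)]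
    refine lintegral_congr_ae ?_
    filter_upwards [(ae_map_iff hX.aemeasurable measurableSet_Ici).2 hX0] with x (hx : 0 ≤ x)
    rw [hexp _ (by linarith), ← ENNReal.ofReal_mul (Real.exp_nonneg _),
      ← Real.exp_add]
    ring_nf
  have h0 := hsplit 0 le_rfl
  simp only [add_zero, mul_zero, neg_zero, Real.exp_zero, ENNReal.ofReal_one, one_mul] at h0
  rw [hsplit t ht, h0]

end ExponentialTail

section Spacing

variable {ι : Type*} [Fintype ι] {T : ι → Ω → ℝ}

lemma measurableSet_setOf_iSup_ne_add_lt (hmeas : ∀ i, Measurable (T i)) (i : ι) (t : ℝ) :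
    MeasurableSet {ω | (⨆ j : {j // j ≠ i}, T j.1 ω) + t < T i ω} :=
  measurableSet_lt ((Measurable.iSup fun j : {j // j ≠ i} => hmeas j.1).add_const t) (hmeas i)

lemma iIndepFun.ae_injective [IsFiniteMeasure μ] (hindep : iIndepFun T μ)
    (hmeas : ∀ i, Measurable (T i)) (hatom : ∀ i x, μ {ω | T i ω = x} = 0) :
    ∀ᵐ ω ∂μ, Injective (T · ω) := by
  have : ∀ᵐ ω ∂μ, ∀ i j, i ≠ j → T i ω ≠ T j ω := by
    simp only [ae_all_iff]
    intro i j hij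
    simpa [ae_iff] using (hindep.indepFun hij).measure_eq_eq_zero (hmeas i) (hmeas j) (hatom j)
  filter_upwards [this] with ω hω i j
  exact not_imp_not.1 (hω i j)

variable [IsProbabilityMeasure μ] [Nontrivial ι]

lemma measure_iUnion_setOf_iSup_ne_lt (hmeas : ∀ i, Measurable (T i))
    (hinj : ∀ᵐ ω ∂μ, Injective (T · ω)) :
    μ (⋃ i, {ω | (⨆ j : {j // j ≠ i}, T j.1 ω) < T i ω}) = 1 := by
  refine (prob_compl_eq_zero_iff (.iUnion fun i => by
    simpa using measurableSet_setOf_iSup_ne_add_lt hmeas i 0)).1 (ae_iff.1 ?_)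
  filter_upwards [hinj] with ω hω
  simpa using exists_iSup_ne_lt_of_injective (T · ω) hω

variable {eps : ℝ} (hindep : iIndepFun T μ) (hmeas : ∀ i, Measurable (T i))
  (hexp : ∀ i, ∀ t : ℝ, 0 ≤ t → μ {ω | t < T i ω} = ENNReal.ofReal (Real.exp (-(eps * t))))
include hindep hmeas hexp

lemma iIndepFun.measure_iSup_ne_add_lt (i : ι) {t : ℝ} (ht : 0 ≤ t) :
    μ {ω | (⨆ j : {j // j ≠ i}, T j.1 ω) + t < T i ω} =
      ENNReal.ofReal (Real.exp (-(eps * t))) * μ {ω | (⨆ j : {j // j ≠ i}, T j.1 ω) < T i ω} := by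
  obtain ⟨j, hj⟩ := exists_ne i
  have hS0 : ∀ᵐ ω ∂μ, 0 ≤ ⨆ j : {j // j ≠ i}, T j.1 ω := by
    filter_upwards [ae_pos_of_exp_tail (hexp j) (hmeas j)] with ω hω
    exact hω.le.trans (le_iSup_ne (T · ω) hj)
  exact (hindep.indepFun_iSup_ne hmeas i).measure_add_lt_eq (hexp i)
    (.iSup fun j => hmeas j.1) (hmeas i) hS0 ht

/-- The union is the event that the largest value exceeds the second largest by more than `t`:
the gap between them is again exponential with rate `eps`. -/
lemma iIndepFun.measure_iUnion_iSup_ne_add_lt {t : ℝ} (ht : 0 ≤ t) :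
    μ (⋃ i, {ω | (⨆ j : {j // j ≠ i}, T j.1 ω) + t < T i ω}) =
      ENNReal.ofReal (Real.exp (-(eps * t))) := by
  have hdisj := pairwise_disjoint_setOf_iSup_ne_add_lt T (le_refl 0)
  have hmeas0 : ∀ i, MeasurableSet {ω | (⨆ j : {j // j ≠ i}, T j.1 ω) < T i ω} := fun i => by
    simpa using measurableSet_setOf_iSup_ne_add_lt hmeas i 0
  simp only [add_zero] at hdisj
  rw [measure_iUnion (pairwise_disjoint_setOf_iSup_ne_add_lt T ht)
      (measurableSet_setOf_iSup_ne_add_lt hmeas · t)]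
  simp_rw [hindep.measure_iSup_ne_add_lt hmeas hexp _ ht]
  rw [ENNReal.tsum_mul_left, ← measure_iUnion hdisj hmeas0,
    measure_iUnion_setOf_iSup_ne_lt hmeas (hindep.ae_injective hmeas fun i =>
      measure_eq_eq_zero_of_exp_tail (hexp i) (hmeas i)), mul_one]

end Spacing

end ProbabilityTheory

theorem stmt_12_general {Ω : Type} [MeasurableSpace Ω] (μ : Measure Ω) [IsProbabilityMeasure μ]
    (eps : ℝ) (n : ℕ) (hn : 2 ≤ n)
    (T : Fin n → Ω → ℝ)
    (hmeas : ∀ i, Measurable (T i))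
    (hindep : iIndepFun T μ)
    (hexp : ∀ i, ∀ t : ℝ, 0 ≤ t →
      μ {ω | t < T i ω} = ENNReal.ofReal (Real.exp (-(eps * t)))) :
    μ {ω | (⨆ i : Fin n, T i ω) ≤
        (⨅ i : Fin n, ⨆ j : {j : Fin n // j ≠ i}, T j.1 ω) + 1} =
      ENNReal.ofReal (1 - Real.exp (-eps)) := by
  have : Nontrivial (Fin n) := Fin.nontrivial_iff_two_le.mpr hn
  have hset : {ω | (⨆ i : Fin n, T i ω) ≤
      (⨅ i : Fin n, ⨆ j : {j : Fin n // j ≠ i}, T j.1 ω) + 1} =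
        (⋃ i, {ω | (⨆ j : {j // j ≠ i}, T j.1 ω) + 1 < T i ω})ᶜ := by
    ext ω
    simp [iSup_le_iInf_iSup_ne_add_iff (T · ω) zero_le_one]
  rw [hset, prob_compl_eq_one_sub (.iUnion (measurableSet_setOf_iSup_ne_add_lt hmeas · 1)),
    hindep.measure_iUnion_iSup_ne_add_lt hmeas hexp zero_le_one, mul_one,
    ENNReal.ofReal_sub 1 (Real.exp_nonneg _), ENNReal.ofReal_one]

/-- Let `n ≥ 2` and let `T 1, …, T n` be i.i.d. exponential random
variables with rate `ε > 0`. Let `M₁ = max_i T i` be the largest value and let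
`M₂ = min_i max_{j ≠ i} T j` be the second-largest value (the maximum of the multiset
`{T 1, …, T n}` after removing one occurrence of `M₁`). Then
`P[M₁ ≤ M₂ + 1] = 1 - e^{-ε}`. -/
theorem stmt_12 {Ω : Type} [MeasurableSpace Ω] (μ : Measure Ω) [IsProbabilityMeasure μ]
    (eps : ℝ) (heps : 0 < eps) (n : ℕ) (hn : 2 ≤ n)
    (T : Fin n → Ω → ℝ)
    (hmeas : ∀ i, Measurable (T i))
    (hindep : iIndepFun T μ)
    (hexp : ∀ i, ∀ t : ℝ, 0 ≤ t →
      μ {ω | t < T i ω} = ENNReal.ofReal (Real.exp (-(eps * t)))) :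
    μ {ω | (⨆ i : Fin n, T i ω) ≤
        (⨅ i : Fin n, ⨆ j : {j : Fin n // j ≠ i}, T j.1 ω) + 1} =
      ENNReal.ofReal (1 - Real.exp (-eps)) :=
  stmt_12_general μ eps n hn T hmeas hindep hexp
end
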